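/- arXiv:2603.06427 — 5 statements merged into one kernel-verified Lean document; each statement's English description precedes it below -/
import Mathlib

section
/- Let z̄ and z̃ be equivalent extended processes via a strictly increasing, surjective, bi-Lipschitz map σ : [0,S̄] → [0,S̃] satisfying L₁ ≤ dσ/ds ≤ L₂ a.e. for some constants 0 < L₁ < L₂. Let z = (S, w⁰, w, y⁰, y, β) be an extended process with S ≤ S̃, and define its pull-back z̄' := (σ⁻¹(S), ((w⁰, w) ∘ σ)·(dσ/ds), (y⁰, y, β) ∘ σ), where σ is restricted to [0, σ⁻¹(S)]. Then z̄' is an extended process equivalent to z, and d̃(z̄', z̄) ≤ max(1/L₁, 1) · d̃(z, z̃). -/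
open MeasureTheory Set Filter
open scoped ENNReal InnerProductSpace BigOperators

noncomputable section

/-- `Vec k` is the Euclidean space `ℝ^k`. -/
abbrev Vec (k : ℕ) : Type := EuclideanSpace ℝ (Fin k)

/-- Raw data of an extended process `(S, w⁰, w, y⁰, y, β)`. -/
structure RawProc (n m : ℕ) where
  S : ℝ
  w0 : ℝ → ℝ
  w : ℝ → Vec m
  y0 : ℝ → ℝ
  y : ℝ → Vec n
  β : ℝ → ℝ

/-- Lebesgue measure restricted to `[0,S]`. -/
def μres (S : ℝ) : Measure ℝ := volume.restrict (Icc 0 S)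

/-- `Γ` is a cone (closed under multiplication by nonnegative scalars). -/
def IsConeIn {F : Type*} [SMul ℝ F] (Γ : Set F) : Prop :=
  ∀ c : ℝ, 0 ≤ c → ∀ v ∈ Γ, c • v ∈ Γ

/-- The vector fields `f, g₁, …, g_m` are `C¹` and bounded together with their
first derivatives. -/
def GoodDyn {n m : ℕ} (f : Vec n → Vec n) (g : Fin m → Vec n → Vec n) : Prop :=
  ContDiff ℝ 1 f ∧ (∀ i, ContDiff ℝ 1 (g i)) ∧
  ∃ M : ℝ, (∀ x, ‖f x‖ ≤ M) ∧ (∀ i x, ‖g i x‖ ≤ M) ∧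
    (∀ x, ‖fderiv ℝ f x‖ ≤ M) ∧ (∀ i x, ‖fderiv ℝ (g i) x‖ ≤ M)

variable {n m : ℕ}

/-- `z = (S, w⁰, w, y⁰, y, β)` is an extended process for the dynamics `f, g`,
control cone `C` and initial point `x0`. -/
def IsExtProcess (f : Vec n → Vec n) (g : Fin m → Vec n → Vec n)
    (C : Set (Vec m)) (x0 : Vec n) (z : RawProc n m) : Prop :=
  0 < z.S ∧ Measurable z.w0 ∧ Measurable z.w ∧
  (∃ M : ℝ, ∀ᵐ s ∂μres z.S, |z.w0 s| + ‖z.w s‖ ≤ M) ∧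
  (∀ᵐ s ∂μres z.S, 0 ≤ z.w0 s ∧ z.w s ∈ C) ∧
  (∃ c : ℝ, 0 < c ∧ ∀ᵐ s ∂μres z.S, c ≤ z.w0 s + ‖z.w s‖) ∧
  (∀ s, s ∉ Ico (0:ℝ) z.S → z.w0 s = 0 ∧ z.w s = 0) ∧
  (∀ s ∈ Icc (0:ℝ) z.S, z.y0 s = ∫ t in (0:ℝ)..s, z.w0 t) ∧
  (∀ s ∈ Icc (0:ℝ) z.S, z.y s = x0 + ∫ t in (0:ℝ)..s,
      (z.w0 t • f (z.y t) + ∑ i, z.w t i • g i (z.y t))) ∧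
  (∀ s ∈ Icc (0:ℝ) z.S, z.β s = ∫ t in (0:ℝ)..s, ‖z.w t‖) ∧
  (∀ s, z.S ≤ s → z.y0 s = z.y0 z.S ∧ z.y s = z.y z.S ∧ z.β s = z.β z.S)

/-- Embedded strict-sense process: `w⁰ > 0` a.e. on `[0,S]`. -/
def IsEmbedded (z : RawProc n m) : Prop := ∀ᵐ s ∂μres z.S, 0 < z.w0 s

/-- Canonical process: `w⁰ + |w| = 1` a.e. on `[0,S]`. -/
def IsCanonical (z : RawProc n m) : Prop := ∀ᵐ s ∂μres z.S, z.w0 s + ‖z.w s‖ = 1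

/-- Feasibility: endpoint in the target and energy bounded by `K`. -/
def Feasible (Tgt : Set (ℝ × Vec n)) (K : ℝ≥0∞) (z : RawProc n m) : Prop :=
  (z.y0 z.S, z.y z.S) ∈ Tgt ∧ ENNReal.ofReal (z.β z.S) ≤ K

/-- The control distance `d̃`. -/
def dtil (z1 z2 : RawProc n m) : ℝ :=
  |z1.S - z2.S| +
    ∫ s in (0:ℝ)..(max z1.S z2.S), (|z1.w0 s - z2.w0 s| + ‖z1.w s - z2.w s‖)

/-- The control distance `d` (Euclidean norm of the control pair, integrated on
`[0, S₁ ∧ S₂]`). -/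
def dcan (z1 z2 : RawProc n m) : ℝ :=
  |z1.S - z2.S| +
    ∫ s in (0:ℝ)..(min z1.S z2.S),
      Real.sqrt ((z1.w0 s - z2.w0 s) ^ 2 + ‖z1.w s - z2.w s‖ ^ 2)

/-- `σ` realizes `z` as a time-reparametrization of `zt`. -/
def TimeChangeOf (z zt : RawProc n m) (σ : ℝ → ℝ) : Prop :=
  StrictMonoOn σ (Icc 0 z.S) ∧ σ '' Icc 0 z.S = Icc 0 zt.S ∧
  (∃ L1 > (0:ℝ), ∃ L2 : ℝ, ∀ s ∈ Icc (0:ℝ) z.S, ∀ t ∈ Icc (0:ℝ) z.S,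
      L1 * |s - t| ≤ |σ s - σ t| ∧ |σ s - σ t| ≤ L2 * |s - t|) ∧
  (∀ᵐ s ∂μres z.S, DifferentiableAt ℝ σ s ∧
      z.w0 s = zt.w0 (σ s) * deriv σ s ∧ z.w s = deriv σ s • zt.w (σ s)) ∧
  (∀ s ∈ Icc (0:ℝ) z.S, z.y0 s = zt.y0 (σ s) ∧ z.y s = zt.y (σ s) ∧ z.β s = zt.β (σ s))

/-- Equivalence of extended processes. -/
def EquivProc (z zt : RawProc n m) : Prop := ∃ σ : ℝ → ℝ, TimeChangeOf z zt σ

/-- Local infimum gap at `zb` with respect to `(X^𝒮_{W̃₊}, d̃)`. -/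
def GapTil (f : Vec n → Vec n) (g : Fin m → Vec n → Vec n) (C : Set (Vec m)) (x0 : Vec n)
    (Tgt : Set (ℝ × Vec n)) (K : ℝ≥0∞) (Ψ : ℝ × Vec n → ℝ) (zb : RawProc n m) : Prop :=
  ∃ r > (0:ℝ), ∃ ε > (0:ℝ), ∀ z : RawProc n m,
    IsExtProcess f g C x0 z → IsEmbedded z → Feasible Tgt K z → dtil z zb < r →
      Ψ (zb.y0 zb.S, zb.y zb.S) + ε ≤ Ψ (z.y0 z.S, z.y z.S)

/-- Local infimum gap at `zb` with respect to `(X^𝒮_{W₊}, d)` (canonical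
embedded strict-sense processes only). -/
def GapCan (f : Vec n → Vec n) (g : Fin m → Vec n → Vec n) (C : Set (Vec m)) (x0 : Vec n)
    (Tgt : Set (ℝ × Vec n)) (K : ℝ≥0∞) (Ψ : ℝ × Vec n → ℝ) (zb : RawProc n m) : Prop :=
  ∃ r > (0:ℝ), ∃ ε > (0:ℝ), ∀ z : RawProc n m,
    IsExtProcess f g C x0 z → IsEmbedded z → IsCanonical z → Feasible Tgt K z →
      dcan z zb < r → Ψ (zb.y0 zb.S, zb.y zb.S) + ε ≤ Ψ (z.y0 z.S, z.y z.S)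

/-- Raw data of a strict-sense process `(T, u, x, 𝓋)`. -/
structure RawStrict (n m : ℕ) where
  T : ℝ
  u : ℝ → Vec m
  x : ℝ → Vec n
  v : ℝ → ℝ

/-- `(T, u, x, 𝓋)` is a strict-sense process. -/
def IsStrictProcess (f : Vec n → Vec n) (g : Fin m → Vec n → Vec n)
    (C : Set (Vec m)) (x0 : Vec n) (P : RawStrict n m) : Prop :=
  0 < P.T ∧ Measurable P.u ∧ IntegrableOn P.u (Icc 0 P.T) ∧
  (∀ᵐ t ∂μres P.T, P.u t ∈ C) ∧
  (∀ t ∈ Icc (0:ℝ) P.T,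
      P.x t = x0 + ∫ τ in (0:ℝ)..t, (f (P.x τ) + ∑ i, P.u τ i • g i (P.x τ))) ∧
  (∀ t ∈ Icc (0:ℝ) P.T, P.v t = ∫ τ in (0:ℝ)..t, ‖P.u τ‖)

/-- Lie bracket `[h,k] = Dk·h − Dh·k` of two vector fields. -/
def lieB {n : ℕ} (h k : Vec n → Vec n) : Vec n → Vec n :=
  fun x => fderiv ℝ k x (h x) - fderiv ℝ h x (k x)

/-- Iterated Lie brackets of the vector fields `g₁, …, g_{m₁}`. -/
inductive IterLie {n m : ℕ} (g : Fin m → Vec n → Vec n) (m1 : ℕ) : (Vec n → Vec n) → Prop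
  | base (i : Fin m) (hi : (i : ℕ) < m1) : IterLie g m1 (g i)
  | brk {h k : Vec n → Vec n} : IterLie g m1 h → IterLie g m1 k → IterLie g m1 (lieB h k)

/-- The extended control set `Ĉ`. -/
def Chat {m : ℕ} (C : Set (Vec m)) : Set (ℝ × Vec m) :=
  closure {c : ℝ × Vec m | 0 < c.1 ∧ c.2 ∈ C ∧ c.1 + ‖c.2‖ = 1}

/-- The unmaximized Hamiltonian. -/
def Hham {n m : ℕ} (f : Vec n → Vec n) (g : Fin m → Vec n → Vec n)
    (x p : Vec n) (p0 piv w0 : ℝ) (w : Vec m) : ℝ :=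
  p0 * w0 + ⟪p, w0 • f x + ∑ i, w i • g i x⟫_ℝ + piv * ‖w‖

/-- A modulus. -/
def IsModulus (ρ : ℝ → ℝ) : Prop :=
  (∀ s t : ℝ, 0 ≤ s → s ≤ t → ρ s ≤ ρ t) ∧ (∀ s : ℝ, 0 ≤ s → 0 ≤ ρ s) ∧ ρ 0 = 0 ∧
    Tendsto ρ (nhdsWithin 0 (Ioi 0)) (nhds 0)

/-- Quasi Differential Quotient of a set-valued map `G` at `(ξ, ybar)` in the
direction of `Γ`. -/
def IsQDQ {N : ℕ} {F : Type*} [NormedAddCommGroup F] [NormedSpace ℝ F]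
    (G : Vec N → Set F) (ξ : Vec N) (ybar : F) (Γ : Set (Vec N))
    (Λ : Set (Vec N →L[ℝ] F)) : Prop :=
  IsCompact Λ ∧ ∃ ρ : ℝ → ℝ, IsModulus ρ ∧ ∃ δb > (0:ℝ), ∀ δ ∈ Icc (0:ℝ) δb,
    ∃ L : Vec N → (Vec N →L[ℝ] F), ∃ h : Vec N → F,
      ContinuousOn (fun x => (L x, h x)) (Metric.ball ξ δ ∩ Γ) ∧
      ∀ x ∈ Metric.ball ξ δ ∩ Γ,
        ybar + L x (x - ξ) + h x ∈ G x ∧ ‖h x‖ ≤ δ * ρ δ ∧ ∃ L' ∈ Λ, ‖L x - L'‖ ≤ ρ δ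

/-- QDQ approximating cone to `E` at `z`. -/
def IsQDQApproxCone {F : Type*} [NormedAddCommGroup F] [NormedSpace ℝ F]
    (E : Set F) (z : F) (Kc : Set F) : Prop :=
  z ∈ E ∧ Convex ℝ Kc ∧ IsConeIn Kc ∧
  ∃ N : ℕ, ∃ G : Vec N → Set F, ∃ Γ : Set (Vec N), ∃ ξ : Vec N, ∃ L : Vec N →L[ℝ] F,
    Convex ℝ Γ ∧ IsConeIn Γ ∧ IsQDQ G ξ z Γ {L} ∧
    (∀ γ ∈ Γ, G (ξ + γ) ⊆ E) ∧ Kc = L '' Γ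

/-- The vector fields are smooth and bounded together with all derivatives. -/
def SmoothDyn {n m : ℕ} (f : Vec n → Vec n) (g : Fin m → Vec n → Vec n) : Prop :=
  ContDiff ℝ (⊤ : ℕ∞) f ∧ (∀ i, ContDiff ℝ (⊤ : ℕ∞) (g i)) ∧
  (∀ k : ℕ, ∃ M : ℝ, ∀ x, ‖iteratedFDeriv ℝ k f x‖ ≤ M) ∧
  (∀ i, ∀ k : ℕ, ∃ M : ℝ, ∀ x, ‖iteratedFDeriv ℝ k (g i) x‖ ≤ M)

/-- Mixing of the first `m1` coordinates of `v` with the remaining coordinates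
of `v'`. -/
def mixVec {m : ℕ} (m1 : ℕ) (v v' : Vec m) : Vec m :=
  ∑ i : Fin m,
    if (i : ℕ) < m1 then EuclideanSpace.single i (v i) else EuclideanSpace.single i (v' i)

/-- `(p, p0, π, λ)` is a multiplier tuple making `zb` a higher-order
`Ψ`-extremal with respect to the QDQ approximating cone `Kc`. -/
def HOMultiplier {n m : ℕ} (f : Vec n → Vec n) (g : Fin m → Vec n → Vec n) (m1 : ℕ)
    (C : Set (Vec m)) (K : ℝ≥0∞) (Ψ : ℝ × Vec n → ℝ) (Kc : Set (ℝ × Vec n))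
    (zb : RawProc n m) (p : ℝ → Vec n) (p0 piv lam : ℝ) : Prop :=
  piv ≤ 0 ∧ 0 ≤ lam ∧
  -- (i) non-triviality
  (p0 ≠ 0 ∨ (∃ s ∈ Icc (0:ℝ) zb.S, p s ≠ 0) ∨ lam ≠ 0) ∧
  (0 < zb.y0 zb.S → ((∃ s ∈ Icc (0:ℝ) zb.S, p s ≠ 0) ∨ lam ≠ 0)) ∧
  -- (ii) non-transversality
  (∃ q G : ℝ × Vec n,
    (∀ v ∈ Kc, q.1 * v.1 + ⟪q.2, v.2⟫_ℝ ≤ 0) ∧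
    (∀ v : ℝ × Vec n, fderiv ℝ Ψ (zb.y0 zb.S, zb.y zb.S) v = G.1 * v.1 + ⟪G.2, v.2⟫_ℝ) ∧
    (p0, p zb.S) = -lam • G - q) ∧
  (ENNReal.ofReal (zb.β zb.S) < K → piv = 0) ∧
  -- (iii) adjoint equation (integral form)
  (∀ s ∈ Icc (0:ℝ) zb.S, p s = p 0 - ∫ t in (0:ℝ)..s,
      (zb.w0 t • (ContinuousLinearMap.adjoint (fderiv ℝ f (zb.y t))) (p t)
        + ∑ i, zb.w t i • (ContinuousLinearMap.adjoint (fderiv ℝ (g i) (zb.y t))) (p t))) ∧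
  -- (iv) first order maximization
  (∀ᵐ s ∂μres zb.S, ∀ c ∈ Chat C,
      Hham f g (zb.y s) (p s) p0 piv c.1 c.2
        ≤ Hham f g (zb.y s) (p s) p0 piv (zb.w0 s) (zb.w s)) ∧
  -- (v) vanishing of the (maximized) Hamiltonian
  (∀ s ∈ Icc (0:ℝ) zb.S,
      IsLUB ((fun c : ℝ × Vec m => Hham f g (zb.y s) (p s) p0 piv c.1 c.2) '' Chat C) 0) ∧
  (ENNReal.ofReal (zb.β zb.S) < K →
      ∀ s ∈ Icc (0:ℝ) zb.S, ∀ i : Fin m, (i : ℕ) < m1 → ⟪p s, g i (zb.y s)⟫_ℝ = 0) ∧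
  -- (vi) higher-order conditions
  (ENNReal.ofReal (zb.β zb.S) < K →
      ∀ B : Vec n → Vec n, IterLie g m1 B →
        (∀ s ∈ Icc (0:ℝ) zb.S, ⟪p s, B (zb.y s)⟫_ℝ = 0) ∧
        (∀ᵐ s ∂μres zb.S,
            ⟪p s, zb.w0 s • lieB f B (zb.y s)
              + ∑ j : Fin m,
                  (if m1 ≤ (j : ℕ) then zb.w s j • lieB (g j) B (zb.y s) else 0)⟫_ℝ = 0))

end
open scoped NNReal

/-- Image of a null set under a Lipschitz-on-`s` real function is null. -/
lemma lipOn_image_null {K : ℝ≥0} {f : ℝ → ℝ} {s N : Set ℝ}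
    (hf : LipschitzOnWith K f s) (hN : N ⊆ s) (h0 : volume N = 0) :
    volume (f '' N) = 0 := by
  have h1 : μH[1] (f '' N) ≤ (K : ℝ≥0∞) ^ (1:ℝ) * μH[1] N :=
    (hf.mono hN).hausdorffMeasure_image_le zero_le_one
  rw [MeasureTheory.hausdorffMeasure_real] at h1
  rw [h0, mul_zero] at h1
  exact le_antisymm h1 zero_le

/-- Change of variables along an a.e. differentiable monotone Lipschitz map. -/
lemma cov_aux {E : Type*} [NormedAddCommGroup E] [NormedSpace ℝ E] [CompleteSpace E]
    (σ : ℝ → ℝ) (Sb : ℝ) {K : ℝ≥0}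
    (hmono : StrictMonoOn σ (Icc 0 Sb))
    (hlip : LipschitzOnWith K σ (Icc 0 Sb))
    (hder : ∀ᵐ s ∂(volume.restrict (Icc 0 Sb)),
        DifferentiableAt ℝ σ s ∧ 0 ≤ deriv σ s)
    {a b : ℝ} (ha : a ∈ Icc 0 Sb) (hb : b ∈ Icc 0 Sb) (hab : a ≤ b) (F : ℝ → E) :
    ∫ t in Ioo a b, deriv σ t • F (σ t) = ∫ r in Ioo (σ a) (σ b), F r := by
  set D : Set ℝ := {s | DifferentiableAt ℝ σ s} with hD
  have hDmeas : MeasurableSet D := measurableSet_of_differentiableAt ℝ σ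
  set s : Set ℝ := Ioo a b ∩ D with hs
  have hsmeas : MeasurableSet s := measurableSet_Ioo.inter hDmeas
  have hIoosub : Ioo a b ⊆ Icc 0 Sb := fun x hx => ⟨ha.1.trans hx.1.le, hx.2.le.trans hb.2⟩
  have hssub : s ⊆ Icc 0 Sb := fun x hx => hIoosub hx.1
  have hf' : ∀ x ∈ s, HasDerivWithinAt σ (deriv σ x) s x := fun x hx =>
    (hx.2.hasDerivAt).hasDerivWithinAt
  have hinj : InjOn σ s := (hmono.injOn).mono hssub
  have h1 : ∀ᵐ t ∂(volume : Measure ℝ), t ∈ Icc 0 Sb → DifferentiableAt ℝ σ t ∧ 0 ≤ deriv σ t :=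
    (ae_restrict_iff' measurableSet_Icc).1 hder
  have hnull : volume (Ioo a b \ D) = 0 := by
    refine measure_mono_null (fun t ht => ?_) (ae_iff.1 h1)
    exact fun h => ht.2 (h (hIoosub ht.1)).1
  have hs_ae : s =ᵐ[volume] Ioo a b := by
    rw [MeasureTheory.ae_eq_set]
    constructor
    · have : s \ Ioo a b = ∅ := by
        apply diff_eq_empty.2; exact inter_subset_left
      simp [this]
    · refine measure_mono_null (fun x hx => ?_) hnull
      exact ⟨hx.1, fun hd => hx.2 ⟨hx.1, hd⟩⟩
  have himg : σ '' s =ᵐ[volume] Ioo (σ a) (σ b) := by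
    rw [MeasureTheory.ae_eq_set]
    constructor
    · have hsub : σ '' s ⊆ Ioo (σ a) (σ b) := by
        rintro _ ⟨x, hx, rfl⟩
        exact ⟨hmono ha (hssub hx) hx.1.1, hmono (hssub hx) hb hx.1.2⟩
      have : σ '' s \ Ioo (σ a) (σ b) = ∅ := diff_eq_empty.2 hsub
      simp [this]
    · have hIVT : Ioo (σ a) (σ b) ⊆ σ '' Ioo a b :=
        intermediate_value_Ioo hab (hlip.continuousOn.mono (Icc_subset_Icc ha.1 hb.2))
      refine measure_mono_null (fun r hr => ?_)
        (lipOn_image_null hlip (fun x hx => hIoosub hx.1) hnull)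
      obtain ⟨x, hx, rfl⟩ := hIVT hr.1
      exact ⟨x, ⟨hx, fun hd => hr.2 ⟨x, ⟨hx, hd⟩, rfl⟩⟩, rfl⟩
  calc ∫ t in Ioo a b, deriv σ t • F (σ t)
      = ∫ t in s, deriv σ t • F (σ t) := (setIntegral_congr_set hs_ae).symm
    _ = ∫ t in s, |deriv σ t| • F (σ t) := by
        refine setIntegral_congr_ae hsmeas ?_
        filter_upwards [h1] with t ht hts
        rw [abs_of_nonneg (ht (hssub hts)).2]
    _ = ∫ r in σ '' s, F r := (integral_image_eq_integral_abs_deriv_smul hsmeas hf' hinj F).symm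
    _ = ∫ r in Ioo (σ a) (σ b), F r := setIntegral_congr_set himg

/-- Pull back an a.e. property along `σ`, using a Lipschitz left inverse. -/
lemma ae_comp_transfer {σ τ : ℝ → ℝ} {Sb St : ℝ} {K : ℝ≥0}
    (hτlip : LipschitzOnWith K τ (Icc 0 St))
    (hmaps : ∀ s ∈ Icc (0:ℝ) Sb, σ s ∈ Icc (0:ℝ) St)
    (hτσ : ∀ s ∈ Icc (0:ℝ) Sb, τ (σ s) = s)
    {P : ℝ → Prop}
    (hP : ∀ᵐ r ∂(volume.restrict (Icc (0:ℝ) St)), P r) :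
    ∀ᵐ s ∂(volume.restrict (Icc (0:ℝ) Sb)), P (σ s) := by
  have h1 : ∀ᵐ r ∂(volume : Measure ℝ), r ∈ Icc (0:ℝ) St → P r :=
    (ae_restrict_iff' measurableSet_Icc).1 hP
  set N : Set ℝ := {r | ¬ (r ∈ Icc (0:ℝ) St → P r)} with hN
  have hNnull : volume N = 0 := ae_iff.1 h1
  have hNsub : N ⊆ Icc 0 St := fun r hr => by
    by_contra h; exact hr fun h' => absurd h' h
  have himg : volume (τ '' N) = 0 := lipOn_image_null hτlip hNsub hNnull
  rw [ae_restrict_iff' measurableSet_Icc]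
  have h2 : ∀ᵐ s ∂(volume : Measure ℝ), s ∉ τ '' N := by
    rw [ae_iff]
    simp only [not_not, Set.setOf_mem_eq]; exact himg
  filter_upwards [h2] with s hs hmem
  by_contra hPs
  exact hs ⟨σ s, fun h => hPs (h (hmaps s hmem)), hτσ s hmem⟩

lemma intInt_Ioo {E : Type*} [NormedAddCommGroup E] [NormedSpace ℝ E]
    {s : ℝ} (hs : 0 ≤ s) (G : ℝ → E) :
    ∫ t in (0:ℝ)..s, G t = ∫ t in Ioo 0 s, G t := by
  rw [intervalIntegral.integral_of_le hs, ← setIntegral_congr_set Ioo_ae_eq_Ioc]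


/-- case (a) in Lemma L1. Pulling an extended process `z` with
`S ≤ S̃` back along the time change `σ` realizing `z̄ ∼ z̃` produces an extended process
equivalent to `z`, with `d̃(z̄', z̄) ≤ max (1/L₁) 1 · d̃(z, z̃)`. -/
theorem stmt_8 {n m : ℕ} (f : Vec n → Vec n) (g : Fin m → Vec n → Vec n)
    (C : Set (Vec m)) (x0 : Vec n)
    (hdyn : GoodDyn f g) (hCclosed : IsClosed C) (hCcone : IsConeIn C)
    (zb zt : RawProc n m)
    (hzb : IsExtProcess f g C x0 zb) (hzt : IsExtProcess f g C x0 zt)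
    (σ : ℝ → ℝ) (htc : TimeChangeOf zb zt σ)
    (L1 L2 : ℝ) (hL1 : 0 < L1) (hL12 : L1 < L2)
    (hder : ∀ᵐ s ∂μres zb.S,
        DifferentiableAt ℝ σ s ∧ L1 ≤ deriv σ s ∧ deriv σ s ≤ L2)
    (τ : ℝ → ℝ)
    (hτrange : ∀ r ∈ Icc (0:ℝ) zt.S, τ r ∈ Icc (0:ℝ) zb.S)
    (hτ1 : ∀ s ∈ Icc (0:ℝ) zb.S, τ (σ s) = s)
    (hτ2 : ∀ r ∈ Icc (0:ℝ) zt.S, σ (τ r) = r)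
    (z : RawProc n m) (hz : IsExtProcess f g C x0 z) (hzS : z.S ≤ zt.S)
    (zb' : RawProc n m)
    (hzb' : zb' = { S := τ z.S
                    w0 := fun s => if s ∈ Ico (0:ℝ) (τ z.S)
                        then z.w0 (σ s) * deriv σ s else 0
                    w := fun s => if s ∈ Ico (0:ℝ) (τ z.S)
                        then deriv σ s • z.w (σ s) else 0
                    y0 := fun s => z.y0 (σ (min s (τ z.S)))
                    y := fun s => z.y (σ (min s (τ z.S)))
                    β := fun s => z.β (σ (min s (τ z.S))) }) :
    IsExtProcess f g C x0 zb' ∧ EquivProc zb' z ∧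
      dtil zb' zb ≤ max (1 / L1) 1 * dtil z zt := by
  subst hzb'
  obtain ⟨hσmono, hσimg, ⟨Lb1, hLb1, Lb2, hbilip⟩, hσae, hσy⟩ := htc
  have hSb : 0 < zb.S := hzb.1
  have hSt : 0 < zt.S := hzt.1
  have hSz : 0 < z.S := hz.1
  have hSbmem : zb.S ∈ Icc (0:ℝ) zb.S := ⟨hSb.le, le_rfl⟩
  have h0mem : (0:ℝ) ∈ Icc (0:ℝ) zb.S := ⟨le_rfl, hSb.le⟩
  have hσmaps : ∀ s ∈ Icc (0:ℝ) zb.S, σ s ∈ Icc (0:ℝ) zt.S := fun s hs => by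
    rw [← hσimg]; exact mem_image_of_mem σ hs
  have σ0 : σ 0 = 0 := by
    obtain ⟨x, hx, hxe⟩ : (0:ℝ) ∈ σ '' Icc 0 zb.S := by
      rw [hσimg]; exact ⟨le_rfl, hSt.le⟩
    have h1 : σ 0 ≤ σ x := hσmono.monotoneOn h0mem hx hx.1
    exact le_antisymm (hxe ▸ h1) (hσmaps 0 h0mem).1
  have σSb : σ zb.S = zt.S := by
    obtain ⟨x, hx, hxe⟩ : zt.S ∈ σ '' Icc 0 zb.S := by
      rw [hσimg]; exact ⟨hSt.le, le_rfl⟩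
    have h1 : σ x ≤ σ zb.S := hσmono.monotoneOn hx hSbmem hx.2
    exact le_antisymm (hσmaps zb.S hSbmem).2 (hxe ▸ h1)
  have hzSmem : z.S ∈ Icc (0:ℝ) zt.S := ⟨hSz.le, hzS⟩
  set T := τ z.S with hTdef
  have hTmem : T ∈ Icc (0:ℝ) zb.S := hτrange z.S hzSmem
  have σT : σ T = z.S := hτ2 z.S hzSmem
  have hTpos : 0 < T := by
    rcases lt_or_eq_of_le hTmem.1 with h | h
    · exact h
    · exfalso; rw [← h, σ0] at σT; rw [← σT] at hSz; exact lt_irrefl 0 hSz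
  have hIccsub : Icc (0:ℝ) T ⊆ Icc (0:ℝ) zb.S := Icc_subset_Icc le_rfl hTmem.2
  have hσmapsT : ∀ s ∈ Icc (0:ℝ) T, σ s ∈ Icc (0:ℝ) z.S := by
    intro s hs
    constructor
    · rw [← σ0]; exact hσmono.monotoneOn h0mem (hIccsub hs) hs.1
    · rw [← σT]; exact hσmono.monotoneOn (hIccsub hs) hTmem hs.2
  -- Lipschitz facts
  have hlipσ : LipschitzOnWith (Real.toNNReal Lb2) σ (Icc (0:ℝ) zb.S) := by
    apply LipschitzOnWith.of_dist_le'
    intro x hx y hy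
    rw [Real.dist_eq, Real.dist_eq]
    exact (hbilip x hx y hy).2
  have hσcont : ContinuousOn σ (Icc (0:ℝ) zb.S) := hlipσ.continuousOn
  have hlipτ : LipschitzOnWith (Real.toNNReal (1/Lb1)) τ (Icc (0:ℝ) zt.S) := by
    apply LipschitzOnWith.of_dist_le'
    intro x hx y hy
    rw [Real.dist_eq, Real.dist_eq]
    have h1 : Lb1 * |τ x - τ y| ≤ |σ (τ x) - σ (τ y)| :=
      (hbilip _ (hτrange x hx) _ (hτrange y hy)).1
    rw [hτ2 x hx, hτ2 y hy] at h1
    rw [one_div, inv_mul_eq_div, le_div_iff₀ hLb1]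
    linarith [h1]
  -- a.e. transfer
  have aeT : ∀ {P : ℝ → Prop}, (∀ᵐ r ∂μres z.S, P r) → (∀ᵐ s ∂μres T, P (σ s)) := by
    intro P hP
    exact ae_comp_transfer (hlipτ.mono (Icc_subset_Icc le_rfl hzS)) hσmapsT
      (fun s hs => hτ1 s (hIccsub hs)) hP
  have hders : ∀ᵐ s ∂μres T, DifferentiableAt ℝ σ s ∧ L1 ≤ deriv σ s ∧ deriv σ s ≤ L2 :=
    ae_restrict_of_ae_restrict_of_subset hIccsub hder
  have haeIcc : ∀ᵐ s ∂μres T, s ∈ Icc (0:ℝ) T := ae_restrict_mem measurableSet_Icc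
  have haeIco : ∀ᵐ s ∂μres T, s ∈ Ico (0:ℝ) T := by
    have h1 : ∀ᵐ s : ℝ ∂volume, s ≠ T := by
      rw [ae_iff]
      have he : {a : ℝ | ¬ a ≠ T} = {T} := by ext a; simp
      rw [he]; exact measure_singleton T
    filter_upwards [haeIcc, ae_restrict_of_ae h1] with s hs hne
    exact ⟨hs.1, lt_of_le_of_ne hs.2 hne⟩
  have hdernn : ∀ᵐ s ∂(volume.restrict (Icc (0:ℝ) zb.S)),
      DifferentiableAt ℝ σ s ∧ 0 ≤ deriv σ s :=
    hder.mono fun s hs => ⟨hs.1, hL1.le.trans hs.2.1⟩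
  have covR : ∀ b ∈ Icc (0:ℝ) zb.S, ∀ F : ℝ → ℝ,
      ∫ t in Ioo 0 b, deriv σ t • F (σ t) = ∫ r in Ioo 0 (σ b), F r := by
    intro b hb F
    have h := cov_aux σ zb.S hσmono hlipσ hdernn ⟨le_rfl, hSb.le⟩ hb hb.1 F
    rwa [σ0] at h
  have covV : ∀ b ∈ Icc (0:ℝ) zb.S, ∀ F : ℝ → Vec n,
      ∫ t in Ioo 0 b, deriv σ t • F (σ t) = ∫ r in Ioo 0 (σ b), F r := by
    intro b hb F
    have h := cov_aux σ zb.S hσmono hlipσ hdernn ⟨le_rfl, hSb.le⟩ hb hb.1 F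
    rwa [σ0] at h
  obtain ⟨-, hzw0m, hzwm, ⟨Mz, hMz⟩, hzcone, ⟨cz, hcz, hzlow⟩, hzvan, hzy0, hzy, hzβ, -⟩ := hz
  refine ⟨?_, ?_, ?_⟩
  · -- IsExtProcess
    have hσc : Continuous fun s : ℝ => σ (max 0 (min s zb.S)) := by
      apply hσcont.comp_continuous (continuous_const.max (continuous_id.min continuous_const))
      intro x
      exact ⟨le_max_left _ _, max_le hSb.le (min_le_right _ _)⟩
    refine ⟨hTpos, ?_, ?_, ?_, ?_, ?_, ?_, ?_, ?_, ?_, ?_⟩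
    · -- Measurable w0
      have heq : (fun s => if s ∈ Ico (0:ℝ) T then z.w0 (σ s) * deriv σ s else 0)
          = fun s => if s ∈ Ico (0:ℝ) T then z.w0 (σ (max 0 (min s zb.S))) * deriv σ s else 0 := by
        funext s
        by_cases hs : s ∈ Ico (0:ℝ) T
        · have hcl : max 0 (min s zb.S) = s := by
            rw [min_eq_left (hs.2.le.trans hTmem.2), max_eq_right hs.1]
          rw [if_pos hs, if_pos hs, hcl]
        · rw [if_neg hs, if_neg hs]
      show Measurable fun s => if s ∈ Ico (0:ℝ) T then z.w0 (σ s) * deriv σ s else 0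
      rw [heq]
      exact Measurable.ite measurableSet_Ico
        ((hzw0m.comp hσc.measurable).mul (measurable_deriv σ)) measurable_const
    · -- Measurable w
      have heq : (fun s => if s ∈ Ico (0:ℝ) T then deriv σ s • z.w (σ s) else 0)
          = fun s => if s ∈ Ico (0:ℝ) T then deriv σ s • z.w (σ (max 0 (min s zb.S))) else 0 := by
        funext s
        by_cases hs : s ∈ Ico (0:ℝ) T
        · have hcl : max 0 (min s zb.S) = s := by
            rw [min_eq_left (hs.2.le.trans hTmem.2), max_eq_right hs.1]
          rw [if_pos hs, if_pos hs, hcl]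
        · rw [if_neg hs, if_neg hs]
      show Measurable fun s => if s ∈ Ico (0:ℝ) T then deriv σ s • z.w (σ s) else 0
      rw [heq]
      exact Measurable.ite measurableSet_Ico
        ((measurable_deriv σ).smul (hzwm.comp hσc.measurable)) measurable_const
    · -- bound
      refine ⟨Mz * L2, ?_⟩
      filter_upwards [hders, aeT hMz, haeIco] with s hd hM hmem
      show |if s ∈ Ico (0:ℝ) T then z.w0 (σ s) * deriv σ s else 0| +
          ‖if s ∈ Ico (0:ℝ) T then deriv σ s • z.w (σ s) else 0‖ ≤ Mz * L2
      rw [if_pos hmem, if_pos hmem]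
      have h0d : 0 ≤ deriv σ s := hL1.le.trans hd.2.1
      have hMz0 : 0 ≤ Mz := le_trans (by positivity) hM
      rw [abs_mul, abs_of_nonneg h0d, norm_smul, Real.norm_eq_abs, abs_of_nonneg h0d]
      calc |z.w0 (σ s)| * deriv σ s + deriv σ s * ‖z.w (σ s)‖
          = (|z.w0 (σ s)| + ‖z.w (σ s)‖) * deriv σ s := by ring
        _ ≤ Mz * L2 := mul_le_mul hM hd.2.2 h0d hMz0
    · -- nonneg and cone
      filter_upwards [hders, aeT hzcone, haeIco] with s hd hc hmem
      have h0d : 0 ≤ deriv σ s := hL1.le.trans hd.2.1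
      constructor
      · show 0 ≤ if s ∈ Ico (0:ℝ) T then z.w0 (σ s) * deriv σ s else 0
        rw [if_pos hmem]; exact mul_nonneg hc.1 h0d
      · show (if s ∈ Ico (0:ℝ) T then deriv σ s • z.w (σ s) else 0) ∈ C
        rw [if_pos hmem]; exact hCcone _ h0d _ hc.2
    · -- lower bound
      refine ⟨L1 * cz, mul_pos hL1 hcz, ?_⟩
      filter_upwards [hders, aeT hzlow, haeIco] with s hd hc hmem
      show L1 * cz ≤ (if s ∈ Ico (0:ℝ) T then z.w0 (σ s) * deriv σ s else 0) +
          ‖if s ∈ Ico (0:ℝ) T then deriv σ s • z.w (σ s) else 0‖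
      rw [if_pos hmem, if_pos hmem, norm_smul, Real.norm_eq_abs,
        abs_of_nonneg (hL1.le.trans hd.2.1)]
      calc L1 * cz ≤ deriv σ s * (z.w0 (σ s) + ‖z.w (σ s)‖) :=
            mul_le_mul hd.2.1 hc hcz.le (hL1.le.trans hd.2.1)
        _ = z.w0 (σ s) * deriv σ s + deriv σ s * ‖z.w (σ s)‖ := by ring
    · -- vanish outside
      intro s hs
      constructor
      · show (if s ∈ Ico (0:ℝ) T then z.w0 (σ s) * deriv σ s else 0) = 0
        rw [if_neg hs]
      · show (if s ∈ Ico (0:ℝ) T then deriv σ s • z.w (σ s) else 0) = 0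
        rw [if_neg hs]
    · -- y0 equation
      intro s hs
      show z.y0 (σ (min s T)) = ∫ t in (0:ℝ)..s,
        (if t ∈ Ico (0:ℝ) T then z.w0 (σ t) * deriv σ t else 0)
      rw [min_eq_left hs.2, hzy0 (σ s) (hσmapsT s hs),
        intInt_Ioo (hσmapsT s hs).1, intInt_Ioo hs.1,
        ← covR s (hIccsub hs) z.w0]
      refine setIntegral_congr_fun measurableSet_Ioo (fun t ht => ?_)
      have hmem : t ∈ Ico (0:ℝ) T := ⟨ht.1.le, lt_of_lt_of_le ht.2 hs.2⟩
      rw [if_pos hmem, smul_eq_mul, mul_comm]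
    · -- y equation
      intro s hs
      show z.y (σ (min s T)) = x0 + ∫ t in (0:ℝ)..s,
        ((if t ∈ Ico (0:ℝ) T then z.w0 (σ t) * deriv σ t else 0) • f (z.y (σ (min t T)))
          + ∑ i, (if t ∈ Ico (0:ℝ) T then deriv σ t • z.w (σ t) else 0) i
              • g i (z.y (σ (min t T))))
      rw [min_eq_left hs.2, hzy (σ s) (hσmapsT s hs)]
      congr 1
      rw [intInt_Ioo (hσmapsT s hs).1, intInt_Ioo hs.1,
        ← covV s (hIccsub hs) (fun r => z.w0 r • f (z.y r) + ∑ i, z.w r i • g i (z.y r))]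
      refine setIntegral_congr_fun measurableSet_Ioo (fun t ht => ?_)
      have hmem : t ∈ Ico (0:ℝ) T := ⟨ht.1.le, lt_of_lt_of_le ht.2 hs.2⟩
      have hmin : min t T = t := min_eq_left hmem.2.le
      rw [hmin, if_pos hmem, if_pos hmem, smul_add, Finset.smul_sum]
      congr 1
      · rw [mul_comm, mul_smul]
      · refine Finset.sum_congr rfl fun i _ => ?_
        rw [PiLp.smul_apply, smul_eq_mul, mul_smul]
    · -- beta equation
      intro s hs
      show z.β (σ (min s T)) = ∫ t in (0:ℝ)..s,
        ‖if t ∈ Ico (0:ℝ) T then deriv σ t • z.w (σ t) else 0‖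
      rw [min_eq_left hs.2, hzβ (σ s) (hσmapsT s hs),
        intInt_Ioo (hσmapsT s hs).1, intInt_Ioo hs.1,
        ← covR s (hIccsub hs) (fun r => ‖z.w r‖)]
      refine setIntegral_congr_ae measurableSet_Ioo ?_
      filter_upwards [(ae_restrict_iff' measurableSet_Icc).1 hders] with t hd ht
      have hmem : t ∈ Ico (0:ℝ) T := ⟨ht.1.le, lt_of_lt_of_le ht.2 hs.2⟩
      obtain ⟨-, hd1, -⟩ := hd ⟨hmem.1, hmem.2.le⟩
      rw [if_pos hmem, norm_smul, Real.norm_eq_abs,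
        abs_of_nonneg (hL1.le.trans hd1), smul_eq_mul]
    · -- constancy
      intro s hsge
      refine ⟨?_, ?_, ?_⟩
      · show z.y0 (σ (min s T)) = z.y0 (σ (min T T))
        rw [min_eq_right hsge, min_self]
      · show z.y (σ (min s T)) = z.y (σ (min T T))
        rw [min_eq_right hsge, min_self]
      · show z.β (σ (min s T)) = z.β (σ (min T T))
        rw [min_eq_right hsge, min_self]
  · -- EquivProc
    refine ⟨σ, hσmono.mono hIccsub, ?_, ⟨Lb1, hLb1, Lb2, fun s hs t ht =>
      hbilip s (hIccsub hs) t (hIccsub ht)⟩, ?_, ?_⟩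
    · apply Subset.antisymm
      · rw [image_subset_iff]; exact fun s hs => hσmapsT s hs
      · have h2 : Icc (σ 0) (σ T) ⊆ σ '' Icc 0 T :=
          intermediate_value_Icc hTmem.1 (hσcont.mono hIccsub)
        rwa [σ0, σT] at h2
    · filter_upwards [hders, haeIco] with s hd hmem
      refine ⟨hd.1, ?_, ?_⟩
      · show (if s ∈ Ico (0:ℝ) T then z.w0 (σ s) * deriv σ s else 0) = z.w0 (σ s) * deriv σ s
        rw [if_pos hmem]
      · show (if s ∈ Ico (0:ℝ) T then deriv σ s • z.w (σ s) else 0) = deriv σ s • z.w (σ s)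
        rw [if_pos hmem]
    · intro s hs
      refine ⟨?_, ?_, ?_⟩
      · show z.y0 (σ (min s T)) = z.y0 (σ s)
        rw [min_eq_left hs.2]
      · show z.y (σ (min s T)) = z.y (σ s)
        rw [min_eq_left hs.2]
      · show z.β (σ (min s T)) = z.β (σ s)
        rw [min_eq_left hs.2]
  · -- dtil bound
    show |T - zb.S| + ∫ t in (0:ℝ)..(max T zb.S),
        (|(if t ∈ Ico (0:ℝ) T then z.w0 (σ t) * deriv σ t else 0) - zb.w0 t|
          + ‖(if t ∈ Ico (0:ℝ) T then deriv σ t • z.w (σ t) else 0) - zb.w t‖)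
        ≤ max (1 / L1) 1 * (|z.S - zt.S| +
            ∫ s in (0:ℝ)..(max z.S zt.S), (|z.w0 s - zt.w0 s| + ‖z.w s - zt.w s‖))
    rw [max_eq_right hTmem.2, max_eq_right hzS]
    have hkey : ∫ t in (0:ℝ)..zb.S,
        (|(if t ∈ Ico (0:ℝ) T then z.w0 (σ t) * deriv σ t else 0) - zb.w0 t|
          + ‖(if t ∈ Ico (0:ℝ) T then deriv σ t • z.w (σ t) else 0) - zb.w t‖)
        = ∫ r in (0:ℝ)..zt.S, (|z.w0 r - zt.w0 r| + ‖z.w r - zt.w r‖) := by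
      rw [intInt_Ioo hSb.le, intInt_Ioo hSt.le]
      have hc := covR zb.S hSbmem (fun r => |z.w0 r - zt.w0 r| + ‖z.w r - zt.w r‖)
      rw [σSb] at hc
      rw [← hc]
      refine setIntegral_congr_ae measurableSet_Ioo ?_
      filter_upwards [(ae_restrict_iff' measurableSet_Icc).1 hder,
        (ae_restrict_iff' measurableSet_Icc).1 hσae] with t h1t h2t hmem
      have hIcc : t ∈ Icc (0:ℝ) zb.S := ⟨hmem.1.le, hmem.2.le⟩
      obtain ⟨hdt, hd1, hd2⟩ := h1t hIcc
      obtain ⟨-, hb0, hbw⟩ := h2t hIcc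
      have h0d : 0 ≤ deriv σ t := hL1.le.trans hd1
      rw [hb0, hbw]
      by_cases hcase : t ∈ Ico (0:ℝ) T
      · rw [if_pos hcase, if_pos hcase, smul_eq_mul, ← sub_mul, abs_mul,
          abs_of_nonneg h0d, ← smul_sub, norm_smul, Real.norm_eq_abs, abs_of_nonneg h0d]
        ring
      · have hTle : T ≤ t := by
          by_contra hlt; push_neg at hlt; exact hcase ⟨hmem.1.le, hlt⟩
        have hσtge : z.S ≤ σ t := by
          rw [← σT]; exact hσmono.monotoneOn hTmem hIcc hTle
        have hz0 := hzvan (σ t) (fun hc' => absurd hc'.2 (not_lt.2 hσtge))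
        rw [if_neg hcase, if_neg hcase, hz0.1, hz0.2, smul_eq_mul]
        simp only [zero_sub, abs_neg, norm_neg]
        rw [abs_mul, abs_of_nonneg h0d, norm_smul, Real.norm_eq_abs, abs_of_nonneg h0d]
        ring
    rw [hkey]
    have hintd : IntegrableOn (deriv σ) (Icc (0:ℝ) zb.S) volume := by
      refine Integrable.mono' (g := fun _ => L2) ?_
        ((measurable_deriv σ).aestronglyMeasurable) ?_
      · exact integrableOn_const measure_Icc_lt_top.ne
      · exact hder.mono fun s hs => by
          rw [Real.norm_eq_abs, abs_of_nonneg (hL1.le.trans hs.2.1)]; exact hs.2.2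
    have e3 : ∫ t in Ioo T zb.S, deriv σ t = zt.S - z.S := by
      have h := cov_aux σ zb.S hσmono hlipσ hdernn hTmem hSbmem hTmem.2 (fun _ => (1:ℝ))
      rw [σT, σSb] at h
      simpa [smul_eq_mul, integral_const, Measure.restrict_apply_univ,
        Real.volume_Ioo, ENNReal.toReal_ofReal (sub_nonneg.2 hzS), max_eq_left (sub_nonneg.2 hzS)] using h
    have hlow : L1 * (zb.S - T) ≤ ∫ t in Ioo T zb.S, deriv σ t := by
      have hm : ∫ t in Ioo T zb.S, (fun _ => L1) t ≤ ∫ t in Ioo T zb.S, deriv σ t := by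
        refine setIntegral_mono_ae_restrict ?_ ?_ ?_
        · exact integrableOn_const measure_Ioo_lt_top.ne
        · exact hintd.mono_set (fun x hx => ⟨hTmem.1.trans hx.1.le, hx.2.le⟩)
        · have h := ae_restrict_of_ae_restrict_of_subset
            (fun x (hx : x ∈ Ioo T zb.S) =>
              (⟨hTmem.1.trans hx.1.le, hx.2.le⟩ : x ∈ Icc (0:ℝ) zb.S)) hder
          exact h.mono fun x hx => hx.2.1
      calc L1 * (zb.S - T) = ∫ t in Ioo T zb.S, (fun _ => L1) t := by
            rw [setIntegral_const, smul_eq_mul, Real.volume_real_Ioo_of_le hTmem.2, mul_comm]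
        _ ≤ _ := hm
    have hTb : zb.S - T ≤ 1 / L1 * |z.S - zt.S| := by
      have h1 : L1 * (zb.S - T) ≤ zt.S - z.S := by
        calc L1 * (zb.S - T) ≤ ∫ t in Ioo T zb.S, deriv σ t := hlow
          _ = zt.S - z.S := e3
      have h2 : zt.S - z.S ≤ |z.S - zt.S| := by
        rw [abs_sub_comm]; exact le_abs_self _
      rw [one_div, inv_mul_eq_div, le_div_iff₀ hL1]
      calc (zb.S - T) * L1 = L1 * (zb.S - T) := by ring
        _ ≤ |z.S - zt.S| := h1.trans h2
    have habs : |T - zb.S| = zb.S - T := by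
      rw [abs_sub_comm, abs_of_nonneg (sub_nonneg.2 hTmem.2)]
    have hInn : 0 ≤ ∫ r in (0:ℝ)..zt.S, (|z.w0 r - zt.w0 r| + ‖z.w r - zt.w r‖) := by
      apply intervalIntegral.integral_nonneg hSt.le
      intro x _; positivity
    rw [habs, mul_add]
    have hM1 : (1:ℝ) ≤ max (1/L1) 1 := le_max_right _ _
    have hM2 : 1/L1 ≤ max (1/L1) 1 := le_max_left _ _
    have e3 : 1 / L1 * |z.S - zt.S| ≤ max (1/L1) 1 * |z.S - zt.S| :=
      mul_le_mul_of_nonneg_right hM2 (abs_nonneg _)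
    have e4 : ∫ r in (0:ℝ)..zt.S, (|z.w0 r - zt.w0 r| + ‖z.w r - zt.w r‖)
        ≤ max (1/L1) 1 * ∫ r in (0:ℝ)..zt.S, (|z.w0 r - zt.w0 r| + ‖z.w r - zt.w r‖) :=
      le_mul_of_one_le_left hInn hM1
    linarith [hTb, e3, e4]
end

section
/- Let z̄ and z̃ be equivalent extended processes via a strictly increasing, surjective, bi-Lipschitz map σ : [0,S̄] → [0,S̃]. Let z = (S, w⁰, w, y⁰, y, β) be an extended process with S > S̃. Define S̄' := S̄ + (S − S̃) and σ_e : [0, S̄'] → [0, S] by σ_e(s) := σ(s) for s ∈ [0, S̄] and σ_e(s) := S̃ + (s − S̄) for s ∈ [S̄, S̄'], and the pull-back z̄' := (S̄', ((w⁰, w) ∘ σ_e)·(dσ_e/ds), (y⁰, y, β) ∘ σ_e). Then z̄' is an extended process equivalent to z, and d̃(z̄', z̄) ≤ d̃(z, z̃). -/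
open MeasureTheory Set Filter
open scoped ENNReal InnerProductSpace BigOperators NNReal Topology


lemma lip_image_null {f : ℝ → ℝ} {s : Set ℝ} {K : ℝ}
    (hK : 0 ≤ K) (hf : ∀ x ∈ s, ∀ y ∈ s, |f x - f y| ≤ K * |x - y|)
    (hs : volume s = 0) : volume (f '' s) = 0 := by
  have hlip : LipschitzOnWith K.toNNReal f s := by
    rw [lipschitzOnWith_iff_dist_le_mul]
    intro x hx y hy
    rw [Real.dist_eq, Real.dist_eq]
    simpa [Real.coe_toNNReal K hK] using hf x hx y hy
  have h := hlip.hausdorffMeasure_image_le (zero_le_one (α := ℝ))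
  rw [hausdorffMeasure_real] at h
  refine le_antisymm ?_ (by positivity)
  calc volume (f '' s) ≤ (K.toNNReal : ℝ≥0∞) ^ (1:ℝ) * volume s := h
  _ = 0 := by rw [hs, mul_zero]

/-- Bundled hypotheses for a bi-Lipschitz monotone time change `[0,A] → [0,B]`. -/
structure TChg (A B L1 L2 : ℝ) (φ : ℝ → ℝ) : Prop where
  hA : 0 < A
  hL1 : 0 < L1
  mono : StrictMonoOn φ (Icc 0 A)
  img : φ '' Icc 0 A = Icc 0 B
  bilip : ∀ s ∈ Icc 0 A, ∀ t ∈ Icc 0 A,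
    L1 * |s - t| ≤ |φ s - φ t| ∧ |φ s - φ t| ≤ L2 * |s - t|
  diff : ∀ᵐ s ∂volume.restrict (Icc 0 A), DifferentiableAt ℝ φ s

namespace TChg

variable {A B L1 L2 : ℝ} {φ : ℝ → ℝ}

lemma monoOn (h : TChg A B L1 L2 φ) : MonotoneOn φ (Icc 0 A) := h.mono.monotoneOn

lemma mapsTo (h : TChg A B L1 L2 φ) : ∀ s ∈ Icc 0 A, φ s ∈ Icc 0 B := by
  intro s hs; rw [← h.img]; exact mem_image_of_mem φ hs

lemma hB0 (h : TChg A B L1 L2 φ) : 0 ≤ B := by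
  have : (Icc (0:ℝ) B).Nonempty := by
    rw [← h.img]; exact (nonempty_Icc.2 h.hA.le).image φ
  exact nonempty_Icc.1 this

lemma zero (h : TChg A B L1 L2 φ) : φ 0 = 0 := by
  have h0A : (0:ℝ) ∈ Icc 0 A := ⟨le_refl 0, h.hA.le⟩
  have h1 : φ 0 ∈ Icc 0 B := h.mapsTo 0 h0A
  obtain ⟨t0, ht0, hφt0⟩ : (0:ℝ) ∈ φ '' Icc 0 A := by
    rw [h.img]; exact ⟨le_refl 0, h.hB0⟩
  have := h.monoOn h0A ht0 ht0.1
  exact le_antisymm (hφt0 ▸ this) h1.1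

lemma top (h : TChg A B L1 L2 φ) : φ A = B := by
  have hAA : A ∈ Icc 0 A := ⟨h.hA.le, le_refl A⟩
  have h1 : φ A ∈ Icc 0 B := h.mapsTo A hAA
  obtain ⟨t0, ht0, hφt0⟩ : B ∈ φ '' Icc 0 A := by
    rw [h.img]; exact ⟨h.hB0, le_refl B⟩
  have := h.monoOn ht0 hAA ht0.2
  exact le_antisymm h1.2 (hφt0 ▸ this)

lemma hB (h : TChg A B L1 L2 φ) : 0 < B := by
  have h1 := (h.bilip A ⟨h.hA.le, le_refl A⟩ 0 ⟨le_refl 0, h.hA.le⟩).1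
  rw [h.zero, h.top, sub_zero, sub_zero, abs_of_pos h.hA, abs_of_nonneg h.hB0] at h1
  exact lt_of_lt_of_le (mul_pos h.hL1 h.hA) h1

lemma hL2 (h : TChg A B L1 L2 φ) : 0 < L2 := by
  have h1 := (h.bilip A ⟨h.hA.le, le_refl A⟩ 0 ⟨le_refl 0, h.hA.le⟩).2
  rw [h.zero, h.top, sub_zero, sub_zero, abs_of_nonneg h.hB0, abs_of_pos h.hA] at h1
  nlinarith [h.hB, h.hA]

lemma hL2' (h : TChg A B L1 L2 φ) : 0 ≤ L2 := h.hL2.le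

lemma lipOn (h : TChg A B L1 L2 φ) : LipschitzOnWith L2.toNNReal φ (Icc 0 A) := by
  rw [lipschitzOnWith_iff_dist_le_mul]
  intro x hx y hy
  rw [Real.dist_eq, Real.dist_eq, Real.coe_toNNReal L2 h.hL2']
  exact (h.bilip x hx y hy).2

lemma cont (h : TChg A B L1 L2 φ) : ContinuousOn φ (Icc 0 A) := h.lipOn.continuousOn

/-- transfer of a.e. properties from `[0,B]` to `[0,A]` along `φ`. -/
lemma pullback {P : ℝ → Prop} (h : TChg A B L1 L2 φ)
    (hP : ∀ᵐ t ∂volume.restrict (Icc 0 B), P t) :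
    ∀ᵐ s ∂volume.restrict (Icc 0 A), P (φ s) := by
  have hN : volume ({t | ¬ P t} ∩ Icc 0 B) = 0 := by
    have := hP
    rw [ae_iff, Measure.restrict_apply' measurableSet_Icc] at this
    exact this
  -- the inverse function
  set ψ := Function.invFunOn φ (Icc 0 A) with hψ
  have hmem : ∀ t ∈ Icc 0 B, ψ t ∈ Icc 0 A ∧ φ (ψ t) = t := by
    intro t ht
    have : ∃ a ∈ Icc 0 A, φ a = t := by
      rw [← h.img] at ht; obtain ⟨a, ha, rfl⟩ := ht; exact ⟨a, ha, rfl⟩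
    exact ⟨Function.invFunOn_mem this, Function.invFunOn_eq this⟩
  have hψφ : ∀ s ∈ Icc 0 A, ψ (φ s) = s := by
    intro s hs
    have h1 := hmem (φ s) (h.mapsTo s hs)
    exact h.mono.injOn h1.1 hs h1.2
  have hlip : ∀ x ∈ ({t | ¬ P t} ∩ Icc 0 B), ∀ y ∈ ({t | ¬ P t} ∩ Icc 0 B),
      |ψ x - ψ y| ≤ L1⁻¹ * |x - y| := by
    intro x hx y hy
    have h1 := (h.bilip (ψ x) (hmem x hx.2).1 (ψ y) (hmem y hy.2).1).1
    rw [(hmem x hx.2).2, (hmem y hy.2).2] at h1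
    rw [inv_mul_eq_div, le_div_iff₀ h.hL1]
    linarith [h1]
  have himg : volume (ψ '' ({t | ¬ P t} ∩ Icc 0 B)) = 0 :=
    lip_image_null (inv_nonneg.2 h.hL1.le) hlip hN
  rw [ae_iff, Measure.restrict_apply' measurableSet_Icc]
  refine measure_mono_null ?_ himg
  intro s hs
  refine ⟨φ s, ⟨hs.1, h.mapsTo s hs.2⟩, hψφ s hs.2⟩


lemma deriv_bounds (h : TChg A B L1 L2 φ) {x : ℝ} (hx : x ∈ Ico 0 A)
    (hd : DifferentiableAt ℝ φ x) : L1 ≤ deriv φ x ∧ deriv φ x ≤ L2 := by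
  have hda : HasDerivAt φ (deriv φ x) x := hd.hasDerivAt
  rw [hasDerivAt_iff_tendsto_slope] at hda
  have htend : Tendsto (slope φ x) (𝓝[>] x) (𝓝 (deriv φ x)) :=
    hda.mono_left (nhdsWithin_mono x (fun y hy => ne_of_gt hy))
  have h1 : ∀ᶠ y in 𝓝[>] x, y < A :=
    eventually_nhdsWithin_of_eventually_nhds (eventually_lt_nhds hx.2)
  have h2 : ∀ᶠ y in 𝓝[>] x, x < y := eventually_mem_nhdsWithin
  have hev : ∀ᶠ y in 𝓝[>] x, L1 ≤ slope φ x y ∧ slope φ x y ≤ L2 := by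
    filter_upwards [h1, h2] with y hyA hxy
    have hxm : x ∈ Icc 0 A := ⟨hx.1, hx.2.le⟩
    have hym : y ∈ Icc 0 A := ⟨hx.1.trans hxy.le, hyA.le⟩
    have hb := h.bilip y hym x hxm
    have hmono : φ x ≤ φ y := h.monoOn hxm hym hxy.le
    rw [abs_of_pos (sub_pos.2 hxy), abs_of_nonneg (sub_nonneg.2 hmono)] at hb
    rw [slope_def_field]
    constructor
    · rw [le_div_iff₀ (by linarith)]; linarith [hb.1]
    · rw [div_le_iff₀ (by linarith)]; linarith [hb.2]
  exact ⟨ge_of_tendsto htend (hev.mono fun y hy => hy.1),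
    le_of_tendsto htend (hev.mono fun y hy => hy.2)⟩

lemma ae_mem_Ico' (hA : 0 < A) : ∀ᵐ s ∂volume.restrict (Icc 0 A), s ∈ Ico 0 A := by
  have h2 : ∀ᵐ s ∂volume.restrict (Icc 0 A), s ∈ Icc 0 A :=
    ae_restrict_mem measurableSet_Icc
  have h3 : ∀ᵐ s : ℝ ∂volume, s ≠ A := by
    rw [ae_iff]
    have : {s : ℝ | ¬ s ≠ A} = {A} := by ext t; simp
    rw [this]; exact Real.volume_singleton
  have h4 : ∀ᵐ s ∂volume.restrict (Icc 0 A), s ≠ A :=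
    h3.filter_mono (ae_mono Measure.restrict_le_self)
  filter_upwards [h2, h4] with s hs hsne
  exact ⟨hs.1, lt_of_le_of_ne hs.2 hsne⟩

lemma ae_deriv (h : TChg A B L1 L2 φ) : ∀ᵐ s ∂volume.restrict (Icc 0 A),
    DifferentiableAt ℝ φ s ∧ L1 ≤ deriv φ s ∧ deriv φ s ≤ L2 := by
  filter_upwards [h.diff, TChg.ae_mem_Ico' h.hA] with s hd hs
  exact ⟨hd, (h.deriv_bounds hs hd).1, (h.deriv_bounds hs hd).2⟩

lemma cov {F : Type*} [NormedAddCommGroup F] [NormedSpace ℝ F]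
    (h : TChg A B L1 L2 φ) (g : ℝ → F) :
    ∫ t in Ioo (0:ℝ) B, g t = ∫ s in Ioo (0:ℝ) A, deriv φ s • g (φ s) := by
  set u : Set ℝ := Ioo 0 A ∩ {x | DifferentiableAt ℝ φ x} with hudef
  have hum : MeasurableSet u :=
    measurableSet_Ioo.inter (measurableSet_of_differentiableAt ℝ φ)
  have husub : u ⊆ Icc 0 A := fun x hx => Ioo_subset_Icc_self hx.1
  have hnull : volume (Icc 0 A \ u) = 0 := by
    have hsub : Icc 0 A \ u ⊆ ({0, A} : Set ℝ) ∪ ({x | ¬ DifferentiableAt ℝ φ x} ∩ Icc 0 A) := by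
      intro x hx
      rcases eq_or_ne x 0 with rfl | hx0
      · exact Or.inl (Or.inl rfl)
      rcases eq_or_ne x A with rfl | hxA
      · exact Or.inl (Or.inr rfl)
      have hxIoo : x ∈ Ioo 0 A :=
        ⟨lt_of_le_of_ne hx.1.1 (Ne.symm hx0), lt_of_le_of_ne hx.1.2 hxA⟩
      have : ¬ DifferentiableAt ℝ φ x := fun hdx => hx.2 ⟨hxIoo, hdx⟩
      exact Or.inr ⟨this, hx.1⟩
    refine measure_mono_null hsub (measure_union_null ?_ ?_)
    · exact Set.Countable.measure_zero (by simp) _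
    · have := h.diff
      rw [ae_iff, Measure.restrict_apply' measurableSet_Icc] at this
      exact this
  have himg_null : volume (φ '' (Icc 0 A \ u)) = 0 := by
    refine lip_image_null h.hL2' (fun x hx y hy => ?_) hnull
    exact (h.bilip x hx.1 y hy.1).2
  have hueq : u =ᵐ[volume] Ioo (0:ℝ) A := by
    rw [MeasureTheory.ae_eq_set]
    constructor
    · have he : u \ Ioo (0:ℝ) A = ∅ := by
        ext x
        simp only [mem_diff, mem_empty_iff_false, iff_false, not_and, not_not]
        exact fun hx => hx.1
      rw [he]; exact measure_empty
    · refine measure_mono_null (fun x hx => ?_) hnull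
      exact (⟨Ioo_subset_Icc_self hx.1, hx.2⟩ : _ ∈ Icc 0 A \ u)
  have himgeq : φ '' u =ᵐ[volume] Ioo (0:ℝ) B := by
    rw [MeasureTheory.ae_eq_set]
    constructor
    · refine measure_mono_null (fun t ht => ?_)
        ((Set.Countable.measure_zero (by simp : ({0, B} : Set ℝ).Countable) volume))
      obtain ⟨⟨x, hxu, rfl⟩, htB⟩ := ht
      have hmem := h.mapsTo x (husub hxu)
      show φ x ∈ ({0, B} : Set ℝ)
      rcases eq_or_ne (φ x) 0 with he | he
      · exact mem_insert_iff.2 (Or.inl he)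
      rcases eq_or_ne (φ x) B with he2 | he2
      · exact mem_insert_iff.2 (Or.inr (mem_singleton_iff.2 he2))
      exact absurd (⟨lt_of_le_of_ne hmem.1 (Ne.symm he), lt_of_le_of_ne hmem.2 he2⟩ : _ ∈ Ioo 0 B) htB
    · refine measure_mono_null (fun t ht => ?_) himg_null
      have : t ∈ φ '' Icc 0 A := by rw [h.img]; exact Ioo_subset_Icc_self ht.1
      obtain ⟨x, hx, rfl⟩ := this
      by_cases hxu : x ∈ u
      · exact absurd (mem_image_of_mem φ hxu) ht.2
      · exact mem_image_of_mem φ ⟨hx, hxu⟩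
  have hder : ∀ x ∈ u, HasDerivWithinAt φ (deriv φ x) u x :=
    fun x hx => (hx.2.hasDerivAt).hasDerivWithinAt
  have hinj : InjOn φ u := h.mono.injOn.mono husub
  calc ∫ t in Ioo (0:ℝ) B, g t = ∫ t in φ '' u, g t :=
        (setIntegral_congr_set himgeq).symm
    _ = ∫ x in u, |deriv φ x| • g (φ x) :=
        integral_image_eq_integral_abs_deriv_smul hum hder hinj g
    _ = ∫ x in u, deriv φ x • g (φ x) := by
        refine setIntegral_congr_fun hum (fun x hx => ?_)
        rw [abs_of_pos (lt_of_lt_of_le h.hL1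
          (h.deriv_bounds ⟨hx.1.1.le, hx.1.2⟩ hx.2).1)]
    _ = ∫ x in Ioo (0:ℝ) A, deriv φ x • g (φ x) := setIntegral_congr_set hueq

lemma covI {F : Type*} [NormedAddCommGroup F] [NormedSpace ℝ F]
    (h : TChg A B L1 L2 φ) (g : ℝ → F) :
    ∫ t in (0:ℝ)..B, g t = ∫ s in (0:ℝ)..A, deriv φ s • g (φ s) := by
  calc ∫ t in (0:ℝ)..B, g t = ∫ t in Ioc (0:ℝ) B, g t :=
        intervalIntegral.integral_of_le h.hB.le
    _ = ∫ t in Ioo (0:ℝ) B, g t := (setIntegral_congr_set Ioo_ae_eq_Ioc).symm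
    _ = ∫ s in Ioo (0:ℝ) A, deriv φ s • g (φ s) := h.cov g
    _ = ∫ s in Ioc (0:ℝ) A, deriv φ s • g (φ s) := setIntegral_congr_set Ioo_ae_eq_Ioc
    _ = ∫ s in (0:ℝ)..A, deriv φ s • g (φ s) :=
        (intervalIntegral.integral_of_le h.hA.le).symm

lemma restrict (h : TChg A B L1 L2 φ) {a : ℝ} (ha : a ∈ Ioc 0 A) :
    TChg a (φ a) L1 L2 φ := by
  have hsub : Icc (0:ℝ) a ⊆ Icc 0 A := Icc_subset_Icc le_rfl ha.2
  refine ⟨ha.1, h.hL1, h.mono.mono hsub, ?_, fun s hs t ht => h.bilip s (hsub hs) t (hsub ht),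
    ae_restrict_of_ae_restrict_of_subset hsub h.diff⟩
  -- image
  have hconn : IsPreconnected (φ '' Icc 0 a) :=
    (isPreconnected_Icc).image φ (h.cont.mono hsub)
  have hsubI : φ '' Icc 0 a ⊆ Icc 0 (φ a) := by
    rintro t ⟨x, hx, rfl⟩
    exact ⟨h.zero ▸ h.monoOn ⟨le_rfl, h.hA.le⟩ (hsub hx) hx.1,
      h.monoOn (hsub hx) ⟨ha.1.le, ha.2⟩ hx.2⟩
  have h0 : (0:ℝ) ∈ φ '' Icc 0 a := ⟨0, ⟨le_rfl, ha.1.le⟩, h.zero⟩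
  have hath : φ a ∈ φ '' Icc 0 a := ⟨a, ⟨ha.1.le, le_rfl⟩, rfl⟩
  exact le_antisymm hsubI (hconn.Icc_subset h0 hath)

end TChg

lemma ae_restrict_Icc_union {a b c : ℝ} {P : ℝ → Prop}
    (h1 : ∀ᵐ s ∂volume.restrict (Icc a b), P s)
    (h2 : ∀ᵐ s ∂volume.restrict (Icc b c), P s) :
    ∀ᵐ s ∂volume.restrict (Icc a c), P s := by
  rw [ae_iff, Measure.restrict_apply' measurableSet_Icc] at h1 h2 ⊢
  refine measure_mono_null (fun x hx => ?_) (measure_union_null h1 h2)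
  rcases le_total x b with hxb | hxb
  · exact Or.inl ⟨hx.1, hx.2.1, hxb⟩
  · exact Or.inr ⟨hx.1, hxb, hx.2.2⟩

lemma II_of_bound {E : Type*} [NormedAddCommGroup E] {f : ℝ → E} {a b M : ℝ}
    (hab : a ≤ b) (hf : AEStronglyMeasurable f (volume.restrict (Icc a b)))
    (hM : ∀ᵐ s ∂volume.restrict (Icc a b), ‖f s‖ ≤ M) :
    IntervalIntegrable f volume a b := by
  rw [intervalIntegrable_iff_integrableOn_Ioc_of_le hab]
  have hint : IntegrableOn f (Icc a b) volume := by
    haveI : IsFiniteMeasure (volume.restrict (Icc a b)) := ⟨by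
      rw [Measure.restrict_apply_univ]; exact measure_Icc_lt_top⟩
    exact ⟨hf, HasFiniteIntegral.of_bounded hM⟩
  exact hint.mono_set Ioc_subset_Icc_self



set_option maxHeartbeats 2000000 in
/-- case (b) in Lemma L1. Pulling an extended process `z` with
`S > S̃` back along the extension `σ_e` of the time change `σ` realizing `z̄ ∼ z̃`
produces an extended process equivalent to `z`, with `d̃(z̄', z̄) ≤ d̃(z, z̃)`. -/
theorem stmt_9 {n m : ℕ} (f : Vec n → Vec n) (g : Fin m → Vec n → Vec n)
    (C : Set (Vec m)) (x0 : Vec n)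
    (hdyn : GoodDyn f g) (hCclosed : IsClosed C) (hCcone : IsConeIn C)
    (zb zt : RawProc n m)
    (hzb : IsExtProcess f g C x0 zb) (hzt : IsExtProcess f g C x0 zt)
    (σ : ℝ → ℝ) (htc : TimeChangeOf zb zt σ)
    (z : RawProc n m) (hz : IsExtProcess f g C x0 z) (hzS : zt.S < z.S)
    (σe : ℝ → ℝ)
    (hσe : ∀ s, σe s = if s ≤ zb.S then σ s else zt.S + (s - zb.S))
    (zb' : RawProc n m)
    (hzb' : zb' = { S := zb.S + (z.S - zt.S)
                    w0 := fun s => if s ∈ Ico (0:ℝ) (zb.S + (z.S - zt.S))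
                        then z.w0 (σe s) * deriv σe s else 0
                    w := fun s => if s ∈ Ico (0:ℝ) (zb.S + (z.S - zt.S))
                        then deriv σe s • z.w (σe s) else 0
                    y0 := fun s => z.y0 (σe (min s (zb.S + (z.S - zt.S))))
                    y := fun s => z.y (σe (min s (zb.S + (z.S - zt.S))))
                    β := fun s => z.β (σe (min s (zb.S + (z.S - zt.S)))) }) :
    IsExtProcess f g C x0 zb' ∧ EquivProc zb' z ∧ dtil zb' zb ≤ dtil z zt := by
  obtain ⟨hzbS, hzbw0m, hzbwm, hzbMb, hzbC, hzbc, hzbsupp, hzby0, hzby, hzbβ, hzbconst⟩ := hzb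
  obtain ⟨hztS, hztw0m, hztwm, hztM, hztC, hztc, hztsupp, hzty0, hzty, hztβ, hztconst⟩ := hzt
  obtain ⟨hzS0, hzw0m, hzwm, ⟨Mz, hMz⟩, hzC, ⟨cz, hcz0, hcz⟩, hzsupp, hzy0, hzy, hzβ, hzconst⟩ := hz
  obtain ⟨hσmono, hσimg, ⟨L1, hL10, L2, hbl⟩, hσae, hσeq⟩ := htc
  simp only [μres] at hσae hMz hzC hcz hzbMb
  obtain ⟨Mb, hMb⟩ := hzbMb
  obtain ⟨Mt, hMt⟩ := hztM
  set S' := zb.S + (z.S - zt.S) with hS'def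
  have hS'b : zb.S < S' := by rw [hS'def]; linarith
  have hS'0 : 0 < S' := lt_trans hzbS hS'b
  have hσdiff : ∀ᵐ s ∂volume.restrict (Icc 0 zb.S), DifferentiableAt ℝ σ s :=
    hσae.mono fun s hs => hs.1
  have hTσ : TChg zb.S zt.S L1 L2 σ := ⟨hzbS, hL10, hσmono, hσimg, hbl, hσdiff⟩
  have hσ0 : σ 0 = 0 := hTσ.zero
  have hσtop : σ zb.S = zt.S := hTσ.top
  have hσes : ∀ s, s ≤ zb.S → σe s = σ s := fun s hs => by rw [hσe s, if_pos hs]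
  have hσea : ∀ s ∈ Icc zb.S S', σe s = s + (zt.S - zb.S) := by
    intro s hs
    by_cases h1 : s ≤ zb.S
    · have hsb : s = zb.S := le_antisymm h1 hs.1
      rw [hσe s, if_pos h1, hsb, hσtop]; ring
    · rw [hσe s, if_neg h1]; ring
  have hσe0 : σe 0 = 0 := by rw [hσes 0 hzbS.le, hσ0]
  have hσetop : σe S' = z.S := by
    rw [hσea S' ⟨hS'b.le, le_rfl⟩, hS'def]; ring
  have hfS : zb'.S = S' := by rw [hzb']
  have hfw0 : ∀ s, zb'.w0 s =
      if s ∈ Ico (0:ℝ) S' then z.w0 (σe s) * deriv σe s else 0 := fun s => by rw [hzb']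
  have hfw : ∀ s, zb'.w s =
      if s ∈ Ico (0:ℝ) S' then deriv σe s • z.w (σe s) else 0 := fun s => by rw [hzb']
  have hfy0 : ∀ s, zb'.y0 s = z.y0 (σe (min s S')) := fun s => by rw [hzb']
  have hfy : ∀ s, zb'.y s = z.y (σe (min s S')) := fun s => by rw [hzb']
  have hfβ : ∀ s, zb'.β s = z.β (σe (min s S')) := fun s => by rw [hzb']
  -- strict monotonicity of σe
  have hσemono : StrictMonoOn σe (Icc 0 S') := by
    intro s hs t ht hst
    by_cases h1 : t ≤ zb.S
    · rw [hσes s (hst.le.trans h1), hσes t h1]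
      exact hσmono ⟨hs.1, hst.le.trans h1⟩ ⟨ht.1, h1⟩ hst
    · push_neg at h1
      rw [hσea t ⟨h1.le, ht.2⟩]
      by_cases h2 : s ≤ zb.S
      · rw [hσes s h2]
        have hm : σ s ≤ zt.S := by
          rw [← hσtop]; exact hTσ.monoOn ⟨hs.1, h2⟩ ⟨hzbS.le, le_rfl⟩ h2
        linarith
      · push_neg at h2
        rw [hσea s ⟨h2.le, hs.2⟩]; linarith
  -- image of σe
  have hσeimg : σe '' Icc 0 S' = Icc 0 z.S := by
    rw [← Icc_union_Icc_eq_Icc hzbS.le hS'b.le, image_union]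
    have e1 : σe '' Icc 0 zb.S = Icc 0 zt.S := by
      rw [image_congr (fun s hs => hσes s hs.2)]; exact hσimg
    have e2 : σe '' Icc zb.S S' = Icc zt.S z.S := by
      rw [image_congr hσea, image_add_const_Icc]
      have q1 : zb.S + (zt.S - zb.S) = zt.S := by ring
      have q2 : S' + (zt.S - zb.S) = z.S := by rw [hS'def]; ring
      rw [q1, q2]
    rw [e1, e2, Icc_union_Icc_eq_Icc hztS.le (le_of_lt hzS)]
  set L1' := min L1 1 with hL1'def
  set L2' := max L2 1 with hL2'def
  have hL1'0 : 0 < L1' := lt_min hL10 one_pos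
  have hL2'1 : (1:ℝ) ≤ L2' := le_max_right _ _
  have hL2'L2 : L2 ≤ L2' := le_max_left _ _
  have hL1'L1 : L1' ≤ L1 := min_le_left _ _
  have hL1'1 : L1' ≤ 1 := min_le_right _ _
  -- bi-Lipschitz bounds for σe
  have hkey : ∀ s ∈ Icc 0 S', ∀ t ∈ Icc 0 S', s ≤ t →
      L1' * (t - s) ≤ σe t - σe s ∧ σe t - σe s ≤ L2' * (t - s) := by
    intro s hs t ht hst
    by_cases h1 : t ≤ zb.S
    · rw [hσes s (hst.trans h1), hσes t h1]
      have hb := hbl t ⟨ht.1, h1⟩ s ⟨hs.1, hst.trans h1⟩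
      have hm : σ s ≤ σ t := hTσ.monoOn ⟨hs.1, hst.trans h1⟩ ⟨ht.1, h1⟩ hst
      rw [abs_of_nonneg (by linarith), abs_of_nonneg (by linarith)] at hb
      have p1 := mul_le_mul_of_nonneg_right hL1'L1 (sub_nonneg.2 hst)
      have p2 := mul_le_mul_of_nonneg_right hL2'L2 (sub_nonneg.2 hst)
      exact ⟨by linarith [hb.1], by linarith [hb.2]⟩
    · push_neg at h1
      rw [hσea t ⟨h1.le, ht.2⟩]
      by_cases h2 : s ≤ zb.S
      · rw [hσes s h2]
        have hb := hbl zb.S ⟨hzbS.le, le_rfl⟩ s ⟨hs.1, h2⟩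
        have hm : σ s ≤ σ zb.S := hTσ.monoOn ⟨hs.1, h2⟩ ⟨hzbS.le, le_rfl⟩ h2
        rw [abs_of_nonneg (by linarith), abs_of_nonneg (by linarith), hσtop] at hb
        have p1 : L1' * (zb.S - s) ≤ L1 * (zb.S - s) :=
          mul_le_mul_of_nonneg_right hL1'L1 (by linarith)
        have p2 : L2 * (zb.S - s) ≤ L2' * (zb.S - s) :=
          mul_le_mul_of_nonneg_right hL2'L2 (by linarith)
        have p3 : L1' * (t - zb.S) ≤ 1 * (t - zb.S) :=
          mul_le_mul_of_nonneg_right hL1'1 (by linarith)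
        have p4 : 1 * (t - zb.S) ≤ L2' * (t - zb.S) :=
          mul_le_mul_of_nonneg_right hL2'1 (by linarith)
        constructor <;> nlinarith [hb.1, hb.2]
      · push_neg at h2
        rw [hσea s ⟨h2.le, hs.2⟩]
        have p3 : L1' * (t - s) ≤ 1 * (t - s) :=
          mul_le_mul_of_nonneg_right hL1'1 (by linarith)
        have p4 : 1 * (t - s) ≤ L2' * (t - s) :=
          mul_le_mul_of_nonneg_right hL2'1 (by linarith)
        constructor <;> linarith
  have hσebl : ∀ s ∈ Icc 0 S', ∀ t ∈ Icc 0 S',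
      L1' * |s - t| ≤ |σe s - σe t| ∧ |σe s - σe t| ≤ L2' * |s - t| := by
    intro s hs t ht
    rcases le_total s t with h | h
    · have hk := hkey s hs t ht h
      have hge : 0 ≤ σe t - σe s :=
        le_trans (mul_nonneg hL1'0.le (sub_nonneg.2 h)) hk.1
      rw [abs_sub_comm s t, abs_sub_comm (σe s) (σe t),
        abs_of_nonneg (sub_nonneg.2 h), abs_of_nonneg hge]
      exact hk
    · have hk := hkey t ht s hs h
      have hge : 0 ≤ σe s - σe t :=
        le_trans (mul_nonneg hL1'0.le (sub_nonneg.2 h)) hk.1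
      rw [abs_of_nonneg (sub_nonneg.2 h), abs_of_nonneg hge]
      exact hk
  -- a.e. facts for σ and the singleton trick
  have hne_vol : ∀ a : ℝ, ∀ᵐ x : ℝ ∂volume, x ≠ a := by
    intro a; rw [ae_iff]
    have he : {x : ℝ | ¬ x ≠ a} = {a} := by ext x; simp
    rw [he]; exact Real.volume_singleton
  have hae1 : ∀ᵐ s ∂volume.restrict (Icc 0 zb.S),
      DifferentiableAt ℝ σe s ∧ deriv σe s = deriv σ s := by
    filter_upwards [hTσ.diff, TChg.ae_mem_Ico' hzbS] with s hd hs
    have hev : σe =ᶠ[nhds s] σ := by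
      filter_upwards [Iio_mem_nhds hs.2] with t ht
      exact hσes t ht.le
    exact ⟨hev.differentiableAt_iff.2 hd, hev.deriv_eq⟩
  have hder_aff : ∀ x, zb.S < x →
      DifferentiableAt ℝ σe x ∧ deriv σe x = 1 := by
    intro x hgt
    have hev : σe =ᶠ[nhds x] (fun t => t + (zt.S - zb.S)) := by
      filter_upwards [Ioi_mem_nhds hgt] with t ht
      rw [hσe t, if_neg (not_le.2 ht)]; ring
    refine ⟨hev.differentiableAt_iff.2 (differentiableAt_fun_id.add_const _), ?_⟩
    rw [hev.deriv_eq]; simp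
  have hσediff : ∀ᵐ s ∂volume.restrict (Icc 0 S'), DifferentiableAt ℝ σe s := by
    apply ae_restrict_Icc_union (b := zb.S)
    · exact hae1.mono fun s hs => hs.1
    · filter_upwards [ae_restrict_mem measurableSet_Icc,
        (hne_vol zb.S).filter_mono (ae_mono Measure.restrict_le_self)] with s hsm hne
      exact (hder_aff s (lt_of_le_of_ne hsm.1 (Ne.symm hne))).1
  have hTe : TChg S' z.S L1' L2' σe := ⟨hS'0, hL1'0, hσemono, hσeimg, hσebl, hσediff⟩
  -- measurability of the new controls
  have hproj : Continuous fun s : ℝ => max 0 (min s S') :=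
    continuous_const.max (continuous_id.min continuous_const)
  have hmapsproj : ∀ s : ℝ, max 0 (min s S') ∈ Icc 0 S' :=
    fun s => ⟨le_max_left _ _, max_le hS'0.le (min_le_right _ _)⟩
  have hσc : Continuous fun s => σe (max 0 (min s S')) :=
    hTe.cont.comp_continuous hproj hmapsproj
  have hσc_eq : ∀ s ∈ Ico (0:ℝ) S', σe (max 0 (min s S')) = σe s := by
    intro s hs; rw [min_eq_left hs.2.le, max_eq_right hs.1]
  have hw0meas : Measurable zb'.w0 := by
    have he : zb'.w0 = (Ico (0:ℝ) S').indicator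
        (fun s => z.w0 (σe (max 0 (min s S'))) * deriv σe s) := by
      funext s
      rw [hfw0 s, Set.indicator_apply]
      by_cases hs : s ∈ Ico (0:ℝ) S'
      · rw [if_pos hs, if_pos hs, hσc_eq s hs]
      · rw [if_neg hs, if_neg hs]
    rw [he]
    exact ((hzw0m.comp hσc.measurable).mul (measurable_deriv σe)).indicator measurableSet_Ico
  have hwmeas : Measurable zb'.w := by
    have he : zb'.w = (Ico (0:ℝ) S').indicator
        (fun s => deriv σe s • z.w (σe (max 0 (min s S')))) := by
      funext s
      rw [hfw s, Set.indicator_apply]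
      by_cases hs : s ∈ Ico (0:ℝ) S'
      · rw [if_pos hs, if_pos hs, hσc_eq s hs]
      · rw [if_neg hs, if_neg hs]
    rw [he]
    exact ((measurable_deriv σe).smul (hzwm.comp hσc.measurable)).indicator measurableSet_Ico
  -- the essential bound for the new controls
  have hbnd' : ∀ᵐ s ∂volume.restrict (Icc 0 S'),
      |zb'.w0 s| + ‖zb'.w s‖ ≤ max (L2' * Mz) 0 := by
    filter_upwards [hTe.pullback hMz, hTe.ae_deriv, TChg.ae_mem_Ico' hS'0] with s hb hd hs
    rw [hfw0 s, hfw s, if_pos hs, if_pos hs]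
    have hd0 : 0 < deriv σe s := lt_of_lt_of_le hL1'0 hd.2.1
    have hX : 0 ≤ |z.w0 (σe s)| + ‖z.w (σe s)‖ := by positivity
    calc |z.w0 (σe s) * deriv σe s| + ‖deriv σe s • z.w (σe s)‖
        = deriv σe s * (|z.w0 (σe s)| + ‖z.w (σe s)‖) := by
          rw [abs_mul, norm_smul, Real.norm_eq_abs, abs_of_pos hd0]; ring
      _ ≤ L2' * (|z.w0 (σe s)| + ‖z.w (σe s)‖) :=
          mul_le_mul_of_nonneg_right hd.2.2 hX
      _ ≤ L2' * Mz := mul_le_mul_of_nonneg_left hb (le_trans zero_le_one hL2'1)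
      _ ≤ max (L2' * Mz) 0 := le_max_left _ _
  -- IsExtProcess zb'
  have hExt : IsExtProcess f g C x0 zb' := by
    refine ⟨?_, hw0meas, hwmeas, ?_, ?_, ?_, ?_, ?_, ?_, ?_, ?_⟩
    · rw [hfS]; exact hS'0
    · exact ⟨max (L2' * Mz) 0, by rw [hfS]; exact hbnd'⟩
    · rw [hfS]
      show ∀ᵐ s ∂volume.restrict (Icc 0 S'), 0 ≤ zb'.w0 s ∧ zb'.w s ∈ C
      filter_upwards [hTe.pullback hzC, hTe.ae_deriv, TChg.ae_mem_Ico' hS'0] with s hb hd hs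
      have hd0 : 0 < deriv σe s := lt_of_lt_of_le hL1'0 hd.2.1
      rw [hfw0 s, hfw s, if_pos hs, if_pos hs]
      exact ⟨mul_nonneg hb.1 hd0.le, hCcone _ hd0.le _ hb.2⟩
    · refine ⟨L1' * cz, mul_pos hL1'0 hcz0, ?_⟩
      rw [hfS]
      show ∀ᵐ s ∂volume.restrict (Icc 0 S'), L1' * cz ≤ zb'.w0 s + ‖zb'.w s‖
      filter_upwards [hTe.pullback hcz, hTe.ae_deriv, TChg.ae_mem_Ico' hS'0] with s hb hd hs
      have hd0 : 0 < deriv σe s := lt_of_lt_of_le hL1'0 hd.2.1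
      rw [hfw0 s, hfw s, if_pos hs, if_pos hs]
      have he : z.w0 (σe s) * deriv σe s + ‖deriv σe s • z.w (σe s)‖
          = deriv σe s * (z.w0 (σe s) + ‖z.w (σe s)‖) := by
        rw [norm_smul, Real.norm_eq_abs, abs_of_pos hd0]; ring
      rw [he]
      exact mul_le_mul hd.2.1 hb hcz0.le hd0.le
    · intro s hs
      rw [hfS] at hs
      exact ⟨by rw [hfw0 s]; exact if_neg hs, by rw [hfw s]; exact if_neg hs⟩
    · intro s hs
      rw [hfS] at hs
      rcases eq_or_lt_of_le hs.1 with h0 | hs0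
      · rw [hfy0 s, ← h0, min_eq_left hS'0.le, hσe0,
          hzy0 0 ⟨le_rfl, hzS0.le⟩, intervalIntegral.integral_same,
          intervalIntegral.integral_same]
      · have hTs : TChg s (σe s) L1' L2' σe := hTe.restrict ⟨hs0, hs.2⟩
        have hmem : σe s ∈ Icc 0 z.S := hTe.mapsTo s hs
        rw [hfy0 s, min_eq_left hs.2, hzy0 (σe s) hmem, hTs.covI z.w0]
        apply intervalIntegral.integral_congr_ae
        filter_upwards [hne_vol S'] with x hx hmemx
        rw [uIoc_of_le hs0.le] at hmemx
        have hxI : x ∈ Ico (0:ℝ) S' :=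
          ⟨hmemx.1.le, lt_of_le_of_ne (hmemx.2.trans hs.2) hx⟩
        rw [hfw0 x, if_pos hxI, smul_eq_mul, mul_comm]
    · intro s hs
      rw [hfS] at hs
      rcases eq_or_lt_of_le hs.1 with h0 | hs0
      · rw [hfy s, ← h0, min_eq_left hS'0.le, hσe0,
          hzy 0 ⟨le_rfl, hzS0.le⟩, intervalIntegral.integral_same,
          intervalIntegral.integral_same]
      · have hTs : TChg s (σe s) L1' L2' σe := hTe.restrict ⟨hs0, hs.2⟩
        have hmem : σe s ∈ Icc 0 z.S := hTe.mapsTo s hs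
        rw [hfy s, min_eq_left hs.2, hzy (σe s) hmem,
          hTs.covI (fun u => z.w0 u • f (z.y u) + ∑ i, z.w u i • g i (z.y u))]
        congr 1
        apply intervalIntegral.integral_congr_ae
        filter_upwards [hne_vol S'] with x hx hmemx
        rw [uIoc_of_le hs0.le] at hmemx
        have hxI : x ∈ Ico (0:ℝ) S' :=
          ⟨hmemx.1.le, lt_of_le_of_ne (hmemx.2.trans hs.2) hx⟩
        rw [hfw0 x, hfw x, hfy x, if_pos hxI, if_pos hxI, min_eq_left hxI.2.le]
        rw [smul_add, Finset.smul_sum]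
        congr 1
        · rw [smul_smul, mul_comm]
        · refine Finset.sum_congr rfl fun i _ => ?_
          rw [PiLp.smul_apply, smul_eq_mul, smul_smul]
    · intro s hs
      rw [hfS] at hs
      rcases eq_or_lt_of_le hs.1 with h0 | hs0
      · rw [hfβ s, ← h0, min_eq_left hS'0.le, hσe0,
          hzβ 0 ⟨le_rfl, hzS0.le⟩, intervalIntegral.integral_same,
          intervalIntegral.integral_same]
      · have hTs : TChg s (σe s) L1' L2' σe := hTe.restrict ⟨hs0, hs.2⟩
        have hmem : σe s ∈ Icc 0 z.S := hTe.mapsTo s hs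
        rw [hfβ s, min_eq_left hs.2, hzβ (σe s) hmem,
          hTs.covI (fun u => ‖z.w u‖)]
        apply intervalIntegral.integral_congr_ae
        filter_upwards [hne_vol S', ae_imp_of_ae_restrict hTe.ae_deriv] with x hx hder hmemx
        rw [uIoc_of_le hs0.le] at hmemx
        have hxI : x ∈ Ico (0:ℝ) S' :=
          ⟨hmemx.1.le, lt_of_le_of_ne (hmemx.2.trans hs.2) hx⟩
        have hd := hder ⟨hxI.1, hxI.2.le⟩
        rw [hfw x, if_pos hxI, norm_smul, Real.norm_eq_abs,
          abs_of_pos (lt_of_lt_of_le hL1'0 hd.2.1), smul_eq_mul]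
    · intro s hs
      rw [hfS] at hs ⊢
      rw [hfy0 s, hfy0 S', hfy s, hfy S', hfβ s, hfβ S',
        min_eq_right hs, min_self]
      exact ⟨rfl, rfl, rfl⟩
  refine ⟨hExt, ⟨σe, ?_, ?_, ⟨L1', hL1'0, L2', ?_⟩, ?_, ?_⟩, ?_⟩
  · rw [hfS]; exact hσemono
  · rw [hfS]; exact hσeimg
  · rw [hfS]; exact hσebl
  · rw [hfS]
    show ∀ᵐ s ∂volume.restrict (Icc 0 S'), _
    filter_upwards [hσediff, TChg.ae_mem_Ico' hS'0] with s hd hs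
    exact ⟨hd, by rw [hfw0 s, if_pos hs], by rw [hfw s, if_pos hs]⟩
  · intro s hs
    rw [hfS] at hs
    exact ⟨by rw [hfy0 s, min_eq_left hs.2], by rw [hfy s, min_eq_left hs.2],
      by rw [hfβ s, min_eq_left hs.2]⟩
  -- the distance estimate
  · set h1f : ℝ → ℝ := fun u => |z.w0 u - zt.w0 u| + ‖z.w u - zt.w u‖ with h1fdef
    set h2f : ℝ → ℝ := fun u => |zb'.w0 u - zb.w0 u| + ‖zb'.w u - zb.w u‖ with h2fdef
    set qf : ℝ → ℝ := fun u => |z.w0 u| + ‖z.w u‖ with hqfdef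
    have hmeas_h1 : Measurable h1f :=
      ((hzw0m.sub hztw0m).abs.add (hzwm.sub hztwm).norm)
    have hmeas_h2 : Measurable h2f :=
      ((hw0meas.sub hzbw0m).abs.add (hwmeas.sub hzbwm).norm)
    have habs_sub : ∀ a b : ℝ, |a - b| ≤ |a| + |b| := by
      intro a b
      calc |a - b| = |a + (-b)| := by rw [sub_eq_add_neg]
        _ ≤ |a| + |(-b)| := abs_add_le _ _
        _ = |a| + |b| := by rw [abs_neg]
    have hII_h2_1 : IntervalIntegrable h2f volume 0 zb.S := by
      apply II_of_bound hzbS.le hmeas_h2.aestronglyMeasurable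
        (M := max (L2' * Mz) 0 + Mb)
      filter_upwards [ae_restrict_of_ae_restrict_of_subset
        (Icc_subset_Icc le_rfl hS'b.le) hbnd', hMb] with s h1 h2
      rw [Real.norm_eq_abs, abs_of_nonneg (by positivity)]
      simp only [h2fdef]
      have q1 := habs_sub (zb'.w0 s) (zb.w0 s)
      have q2 := norm_sub_le (zb'.w s) (zb.w s)
      linarith
    have hsuppzb : ∀ s, zb.S ≤ s → zb.w0 s = 0 ∧ zb.w s = 0 := by
      intro s hss
      exact hzbsupp s (fun hc => absurd hc.2 (not_lt.2 hss))
    have hsuppzt : ∀ s, zt.S ≤ s → zt.w0 s = 0 ∧ zt.w s = 0 := by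
      intro s hss
      exact hztsupp s (fun hc => absurd hc.2 (not_lt.2 hss))
    have hII_h2_2 : IntervalIntegrable h2f volume zb.S S' := by
      apply II_of_bound hS'b.le hmeas_h2.aestronglyMeasurable
        (M := max (L2' * Mz) 0)
      filter_upwards [ae_restrict_of_ae_restrict_of_subset
        (Icc_subset_Icc hzbS.le le_rfl) hbnd',
        ae_restrict_mem measurableSet_Icc] with s h1 hsm
      rw [Real.norm_eq_abs, abs_of_nonneg (by positivity)]
      simp only [h2fdef]
      rw [(hsuppzb s hsm.1).1, (hsuppzb s hsm.1).2, sub_zero, sub_zero]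
      exact h1
    have hII_h1_1 : IntervalIntegrable h1f volume 0 zt.S := by
      apply II_of_bound hztS.le hmeas_h1.aestronglyMeasurable (M := Mz + Mt)
      filter_upwards [ae_restrict_of_ae_restrict_of_subset
        (Icc_subset_Icc le_rfl hzS.le) hMz, hMt] with s q1 q2
      rw [Real.norm_eq_abs, abs_of_nonneg (by positivity)]
      simp only [h1fdef]
      have q3 := habs_sub (z.w0 s) (zt.w0 s)
      have q4 := norm_sub_le (z.w s) (zt.w s)
      linarith
    have hII_h1_2 : IntervalIntegrable h1f volume zt.S z.S := by
      apply II_of_bound hzS.le hmeas_h1.aestronglyMeasurable (M := Mz)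
      filter_upwards [ae_restrict_of_ae_restrict_of_subset
        (Icc_subset_Icc hztS.le le_rfl) hMz,
        ae_restrict_mem measurableSet_Icc] with s q1 hsm
      rw [Real.norm_eq_abs, abs_of_nonneg (by positivity)]
      simp only [h1fdef]
      rw [(hsuppzt s hsm.1).1, (hsuppzt s hsm.1).2, sub_zero, sub_zero]
      exact q1
    have e_p1 : ∫ s in (0:ℝ)..zb.S, h2f s = ∫ t in (0:ℝ)..zt.S, h1f t := by
      rw [hTσ.covI h1f]
      apply intervalIntegral.integral_congr_ae
      filter_upwards [ae_imp_of_ae_restrict hσae, ae_imp_of_ae_restrict hae1,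
        ae_imp_of_ae_restrict hTσ.ae_deriv] with x hx1 hx2 hx3 hmem
      rw [uIoc_of_le hzbS.le] at hmem
      have hxI : x ∈ Icc (0:ℝ) zb.S := ⟨hmem.1.le, hmem.2⟩
      obtain ⟨hdσ, he0, hew⟩ := hx1 hxI
      obtain ⟨hdσe, hdeq⟩ := hx2 hxI
      have hd := hx3 hxI
      have hxIco : x ∈ Ico (0:ℝ) S' := ⟨hmem.1.le, lt_of_le_of_lt hmem.2 hS'b⟩
      simp only [h2fdef, h1fdef]
      rw [hfw0 x, hfw x, if_pos hxIco, if_pos hxIco, hσes x hmem.2, hdeq, he0, hew]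
      rw [smul_eq_mul, ← smul_sub, norm_smul, Real.norm_eq_abs, ← sub_mul, abs_mul]
      rw [abs_of_nonneg (le_trans hL10.le hd.2.1)]
      ring
    have e_p2 : ∫ s in zb.S..S', h2f s = ∫ t in zt.S..z.S, h1f t := by
      have step1 : ∫ s in zb.S..S', h2f s
          = ∫ s in zb.S..S', qf (s + (zt.S - zb.S)) := by
        apply intervalIntegral.integral_congr_ae
        filter_upwards [hne_vol S'] with x hxne hmem
        rw [uIoc_of_le hS'b.le] at hmem
        have hgt : zb.S < x := hmem.1
        have hlt : x < S' := lt_of_le_of_ne hmem.2 hxne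
        have hxIco : x ∈ Ico (0:ℝ) S' := ⟨(hzbS.trans hgt).le, hlt⟩
        simp only [h2fdef, hqfdef]
        rw [hfw0 x, hfw x, if_pos hxIco, if_pos hxIco,
          (hsuppzb x hgt.le).1, (hsuppzb x hgt.le).2, sub_zero, sub_zero]
        rw [hσe x, if_neg (not_le.2 hgt), (hder_aff x hgt).2, mul_one, one_smul]
        have harg : zt.S + (x - zb.S) = x + (zt.S - zb.S) := by ring
        rw [harg]
      rw [step1, intervalIntegral.integral_comp_add_right qf (zt.S - zb.S)]
      have q1 : zb.S + (zt.S - zb.S) = zt.S := by ring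
      have q2 : S' + (zt.S - zb.S) = z.S := by rw [hS'def]; ring
      rw [q1, q2]
      apply intervalIntegral.integral_congr
      intro x hx
      rw [uIcc_of_le hzS.le] at hx
      simp only [h1fdef, hqfdef]
      rw [(hsuppzt x hx.1).1, (hsuppzt x hx.1).2, sub_zero, sub_zero]
    have habsS : |S' - zb.S| = z.S - zt.S := by
      rw [hS'def]
      have : zb.S + (z.S - zt.S) - zb.S = z.S - zt.S := by ring
      rw [this, abs_of_pos (by linarith)]
    have e_left : dtil zb' zb
        = (z.S - zt.S) + ((∫ s in (0:ℝ)..zb.S, h2f s) + ∫ s in zb.S..S', h2f s) := by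
      unfold dtil
      rw [hfS, max_eq_left hS'b.le, habsS, ← h2fdef,
        intervalIntegral.integral_add_adjacent_intervals hII_h2_1 hII_h2_2]
    have e_right : dtil z zt
        = (z.S - zt.S) + ((∫ t in (0:ℝ)..zt.S, h1f t) + ∫ t in zt.S..z.S, h1f t) := by
      unfold dtil
      rw [max_eq_left hzS.le, abs_of_pos (by linarith), ← h1fdef,
        intervalIntegral.integral_add_adjacent_intervals hII_h1_1 hII_h1_2]
    rw [e_left, e_right, e_p1, e_p2]
end

section
/- Let z̄ be a canonical extended process and z any extended process. Define σ : [0,∞) → [0,∞) by σ(s) := y⁰(s) + β(s) for s ∈ [0,S] and σ(s) := y⁰(S) + β(S) + (s − S) for s ≥ S. Then ∫₀^∞ |dσ/ds(s) − 1| ds ≤ d̃(z, z̄), and consequently sup_{s ≥ 0} |σ(s) − s| ≤ d̃(z, z̄). -/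
open MeasureTheory Set Filter
open scoped ENNReal InnerProductSpace BigOperators

section Aux

open Metric in
theorem ae_hasDerivAt_intInt {h : ℝ → ℝ} (hint : Integrable h) :
    ∀ᵐ x : ℝ, HasDerivAt (fun s => ∫ t in (0:ℝ)..s, h t) (h x) x := by
  filter_upwards [(Besicovitch.vitaliFamily (volume : Measure ℝ)).ae_tendsto_average_norm_sub
    hint.locallyIntegrable] with x hx
  have hx' : Tendsto (fun r : ℝ => ⨍ t in closedBall x r, |h t - h x|) (nhdsWithin 0 (Ioi 0))
      (nhds 0) := by
    have := hx.comp (Besicovitch.tendsto_filterAt volume x)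
    simpa [Function.comp_def, Real.norm_eq_abs] using this
  have habs : Tendsto (fun y : ℝ => |y - x|) (nhdsWithin x {x}ᶜ) (nhdsWithin 0 (Ioi 0)) := by
    rw [tendsto_nhdsWithin_iff]
    constructor
    · have : Tendsto (fun y : ℝ => |y - x|) (nhds x) (nhds |x - x|) :=
        ((continuous_id.sub continuous_const).abs.tendsto x)
      simpa using this.mono_left nhdsWithin_le_nhds
    · filter_upwards [self_mem_nhdsWithin] with y hy
      exact abs_pos.2 (sub_ne_zero.2 hy)
  have hg : Tendsto (fun y : ℝ => 2 * ⨍ t in closedBall x |y - x|, |h t - h x|)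
      (nhdsWithin x {x}ᶜ) (nhds 0) := by
    have := (hx'.comp habs).const_mul 2
    simpa using this
  rw [hasDerivAt_iff_tendsto_slope]
  rw [tendsto_iff_norm_sub_tendsto_zero]
  apply squeeze_zero' (Eventually.of_forall fun y => norm_nonneg _) _ hg
  filter_upwards [self_mem_nhdsWithin] with y hy
  set r : ℝ := |y - x| with hr
  have hr0 : 0 < r := abs_pos.2 (sub_ne_zero.2 hy)
  have hIcb : IntegrableOn (fun t => |h t - h x|) (closedBall x r) volume :=
    (hint.integrableOn.sub (integrableOn_const measure_closedBall_lt_top.ne)).abs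
  have key : |(∫ t in (0:ℝ)..y, h t) - (∫ t in (0:ℝ)..x, h t) - (y - x) * h x|
      ≤ ∫ t in closedBall x r, |h t - h x| := by
    have h1 : (∫ t in (0:ℝ)..y, h t) - (∫ t in (0:ℝ)..x, h t) = ∫ t in x..y, h t :=
      intervalIntegral.integral_interval_sub_left hint.intervalIntegrable
        hint.intervalIntegrable
    have h2 : (y - x) * h x = ∫ t in x..y, h x := by
      rw [intervalIntegral.integral_const, smul_eq_mul]
    rw [h1, h2, ← intervalIntegral.integral_sub hint.intervalIntegrable
      (intervalIntegrable_const)]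
    calc |∫ t in x..y, (h t - h x)| ≤ ∫ t in Set.uIoc x y, ‖h t - h x‖ := by
          rw [← Real.norm_eq_abs]
          exact intervalIntegral.norm_integral_le_integral_norm_uIoc
      _ ≤ ∫ t in closedBall x r, |h t - h x| := by
          apply setIntegral_mono_set hIcb
          · exact Eventually.of_forall fun t => abs_nonneg _
          · apply HasSubset.Subset.eventuallyLE
            intro t ht
            rw [mem_closedBall, Real.dist_eq]
            have h3 : y - x ≤ r := le_abs_self _
            have h4 : -r ≤ y - x := neg_abs_le _
            rcases Set.mem_uIoc.1 ht with ⟨h5, h6⟩ | ⟨h5, h6⟩ <;>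
              (rw [abs_le]; constructor <;> linarith)
  have havg : ∫ t in closedBall x r, |h t - h x|
      = (2 * r) * ⨍ t in closedBall x r, |h t - h x| := by
    rw [setAverage_eq, Real.volume_real_closedBall hr0.le, smul_eq_mul,
      ← mul_assoc, mul_inv_cancel₀ (by linarith), one_mul]
  have hslope : ‖slope (fun s => ∫ t in (0:ℝ)..s, h t) x y - h x‖
      = r⁻¹ * |(∫ t in (0:ℝ)..y, h t) - (∫ t in (0:ℝ)..x, h t) - (y - x) * h x| := by
    rw [slope_def_field, Real.norm_eq_abs, div_sub' (sub_ne_zero.2 hy), abs_div,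
      div_eq_inv_mul]
  rw [hslope]
  calc r⁻¹ * |(∫ t in (0:ℝ)..y, h t) - (∫ t in (0:ℝ)..x, h t) - (y - x) * h x|
      ≤ r⁻¹ * ((2 * r) * ⨍ t in closedBall x r, |h t - h x|) := by
        apply mul_le_mul_of_nonneg_left _ (inv_nonneg.2 hr0.le)
        rw [← havg]; exact key
    _ = 2 * ⨍ t in closedBall x r, |h t - h x| := by
        field_simp

theorem integrable_of_bdd_supp {E : Type*} [NormedAddCommGroup E] {h : ℝ → E} {S M : ℝ}
    (hm : AEStronglyMeasurable h volume) (hsupp : ∀ s, s ∉ Ico (0:ℝ) S → h s = 0)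
    (hbd : ∀ᵐ s ∂(volume.restrict (Icc (0:ℝ) S)), ‖h s‖ ≤ M) : Integrable h volume := by
  have hsupp' : Function.support h ⊆ Icc 0 S := by
    intro s hs
    by_contra hns
    exact hs (hsupp s (fun hmem => hns ⟨hmem.1, hmem.2.le⟩))
  rw [← integrableOn_iff_integrable_of_support_subset hsupp']
  exact Integrable.mono' (integrableOn_const measure_Icc_lt_top.ne) hm.restrict hbd

end Aux


/-- For `z̄` canonical and `z` any extended process, the time change
`σ = y⁰ + β` (extended with slope one after `S`) satisfies
`∫₀^∞ |σ' − 1| ≤ d̃(z, z̄)` and hence `sup_{s ≥ 0} |σ(s) − s| ≤ d̃(z, z̄)`. -/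
theorem stmt_10 {n m : ℕ} (f : Vec n → Vec n) (g : Fin m → Vec n → Vec n)
    (C : Set (Vec m)) (x0 : Vec n)
    (hdyn : GoodDyn f g) (hCclosed : IsClosed C) (hCcone : IsConeIn C)
    (zb : RawProc n m) (hzb : IsExtProcess f g C x0 zb) (hcanb : IsCanonical zb)
    (z : RawProc n m) (hz : IsExtProcess f g C x0 z)
    (σ : ℝ → ℝ)
    (hσ : ∀ s, σ s = if s ≤ z.S then z.y0 s + z.β s
        else z.y0 z.S + z.β z.S + (s - z.S)) :
    (∫ s in Ioi (0:ℝ), |deriv σ s - 1|) ≤ dtil z zb ∧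
      ∀ s ∈ Ici (0:ℝ), |σ s - s| ≤ dtil z zb := by
  classical
  obtain ⟨hS, hw0m, hwm, ⟨Mz, hMz⟩, hnn, -, hzero, hy0, -, hβ, -⟩ := hz
  obtain ⟨hSb, hw0mb, hwmb, ⟨Mb, hMb⟩, -, -, hzerob, -, -, -, -⟩ := hzb
  set h : ℝ → ℝ := fun s => z.w0 s + ‖z.w s‖ with hh
  -- integrability of all the controls
  have hint_w0 : Integrable z.w0 volume := by
    refine integrable_of_bdd_supp (M := Mz) hw0m.aestronglyMeasurable (fun s hs => (hzero s hs).1) ?_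
    filter_upwards [hMz] with s hs
    rw [Real.norm_eq_abs]
    have := norm_nonneg (z.w s); linarith
  have hint_w : Integrable z.w volume := by
    refine integrable_of_bdd_supp (M := Mz) hwm.aestronglyMeasurable (fun s hs => (hzero s hs).2) ?_
    filter_upwards [hMz] with s hs
    have := abs_nonneg (z.w0 s); linarith
  have hint_w0b : Integrable zb.w0 volume := by
    refine integrable_of_bdd_supp (M := Mb) hw0mb.aestronglyMeasurable (fun s hs => (hzerob s hs).1) ?_
    filter_upwards [hMb] with s hs
    rw [Real.norm_eq_abs]
    have := norm_nonneg (zb.w s); linarith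
  have hint_wb : Integrable zb.w volume := by
    refine integrable_of_bdd_supp (M := Mb) hwmb.aestronglyMeasurable (fun s hs => (hzerob s hs).2) ?_
    filter_upwards [hMb] with s hs
    have := abs_nonneg (zb.w0 s); linarith
  have hint_h : Integrable h volume := hint_w0.add hint_w.norm
  set Φ : ℝ → ℝ := fun s => ∫ t in (0:ℝ)..s, h t with hΦ
  -- σ agrees with Φ on [0, z.S]
  have hσΦ : ∀ s ∈ Icc (0:ℝ) z.S, σ s = Φ s := by
    intro s hs
    rw [hσ s, if_pos hs.2, hy0 s hs, hβ s hs, hΦ]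
    rw [← intervalIntegral.integral_add hint_w0.intervalIntegrable
      hint_w.norm.intervalIntegrable]
  -- derivative of σ a.e. on (0, z.S)
  have hderiv1 : ∀ᵐ x : ℝ ∂volume, x ∈ Ioo (0:ℝ) z.S → deriv σ x = h x := by
    filter_upwards [ae_hasDerivAt_intInt hint_h] with x hx hmem
    have hev : σ =ᶠ[nhds x] Φ := by
      filter_upwards [Ioo_mem_nhds hmem.1 hmem.2] with t ht
      exact hσΦ t ⟨ht.1.le, ht.2.le⟩
    exact (HasDerivAt.congr_of_eventuallyEq hx hev).deriv
  -- derivative of σ beyond z.S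
  have hderiv2 : ∀ x : ℝ, z.S < x → deriv σ x = 1 := by
    intro x hx
    have hψ : HasDerivAt (fun t => z.y0 z.S + z.β z.S + (t - z.S)) 1 x := by
      simpa using ((hasDerivAt_id x).sub_const z.S).const_add (z.y0 z.S + z.β z.S)
    have hev : σ =ᶠ[nhds x] (fun t => z.y0 z.S + z.β z.S + (t - z.S)) := by
      filter_upwards [Ioi_mem_nhds hx] with t ht
      rw [hσ t, if_neg (not_le.2 ht)]
    exact (HasDerivAt.congr_of_eventuallyEq hψ hev).deriv
  set M : ℝ := max z.S zb.S with hM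
  set mn : ℝ := min z.S zb.S with hmn
  have hM0 : 0 < M := lt_of_lt_of_le hS (le_max_left _ _)
  have hmn0 : 0 < mn := lt_min hS hSb
  have haneS : ∀ᵐ s : ℝ ∂volume, s ≠ z.S := by
    simpa using measure_eq_zero_iff_ae_notMem.mp (measure_singleton z.S)
  have haneSb : ∀ᵐ s : ℝ ∂volume, s ≠ zb.S := by
    simpa using measure_eq_zero_iff_ae_notMem.mp (measure_singleton zb.S)
  have hcan' : ∀ᵐ s : ℝ ∂volume, s ∈ Icc (0:ℝ) zb.S → zb.w0 s + ‖zb.w s‖ = 1 :=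
    ae_imp_of_ae_restrict hcanb
  have hnn' : ∀ᵐ s : ℝ ∂volume, s ∈ Icc (0:ℝ) z.S → 0 ≤ z.w0 s := by
    filter_upwards [ae_imp_of_ae_restrict hnn] with s hs hmem
    exact (hs hmem).1
  set F : ℝ → ℝ := fun s => |z.w0 s - zb.w0 s| + ‖z.w s - zb.w s‖ with hF
  set I : ℝ → ℝ := (Ioo mn M).indicator (fun _ => (1:ℝ)) with hI
  have hFint : Integrable F volume := (hint_w0.sub hint_w0b).abs.add (hint_w.sub hint_wb).norm
  have hIint : Integrable I volume :=
    (integrable_indicator_iff measurableSet_Ioo).2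
      (integrableOn_const measure_Ioo_lt_top.ne)
  have habs_int : IntegrableOn (fun s => |h s - 1|) (Ioo (0:ℝ) z.S) volume :=
    (hint_h.integrableOn.sub (integrableOn_const measure_Ioo_lt_top.ne)).abs
  set G : ℝ → ℝ := (Ioo (0:ℝ) z.S).indicator (fun s => |h s - 1|) with hG
  have hGint : Integrable G volume := (integrable_indicator_iff measurableSet_Ioo).2 habs_int
  -- the integral over Ioi 0 equals the integral over Ioo 0 z.S
  have hIoi : (∫ s in Ioi (0:ℝ), |deriv σ s - 1|) = ∫ s in Ioo (0:ℝ) z.S, |h s - 1| := by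
    have hcongr : (fun s => |deriv σ s - 1|) =ᵐ[volume.restrict (Ioi (0:ℝ))] G := by
      rw [EventuallyEq, ae_restrict_iff' measurableSet_Ioi]
      filter_upwards [hderiv1, haneS] with s h1 h2 hs
      by_cases hmem : s ∈ Ioo (0:ℝ) z.S
      · rw [hG, indicator_of_mem hmem, h1 hmem]
      · rw [hG, indicator_of_notMem hmem]
        have hgt : z.S < s := by
          rcases not_and_or.1 (fun hc => hmem ⟨hc.1, hc.2⟩) with hc | hc
          · exact absurd hs hc
          · exact lt_of_le_of_ne (not_lt.1 hc) (Ne.symm h2)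
        rw [hderiv2 s hgt]
        simp
    rw [integral_congr_ae hcongr, hG, setIntegral_indicator measurableSet_Ioo,
      inter_eq_self_of_subset_right Ioo_subset_Ioi_self]
  -- a.e. pointwise bound
  have hbound : ∀ᵐ s : ℝ ∂volume, s ∈ Ioo (0:ℝ) M → G s ≤ F s + I s := by
    filter_upwards [hcan', hnn', haneSb] with s hc hn hne hsM
    have hI0 : 0 ≤ I s := indicator_nonneg (fun _ _ => zero_le_one) s
    by_cases hmem : s ∈ Ioo (0:ℝ) z.S
    · rw [hG, indicator_of_mem hmem]
      by_cases hsb : s < zb.S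
      · have h1 : zb.w0 s + ‖zb.w s‖ = 1 := hc ⟨hsM.1.le, hsb.le⟩
        have h2 : |‖z.w s‖ - ‖zb.w s‖| ≤ ‖z.w s - zb.w s‖ := abs_norm_sub_norm_le _ _
        have h3 : |h s - 1| ≤ F s := by
          rw [← h1]
          have h4 : h s - (zb.w0 s + ‖zb.w s‖)
              = (z.w0 s - zb.w0 s) + (‖z.w s‖ - ‖zb.w s‖) := by
            rw [hh]; ring
          rw [h4]
          calc |(z.w0 s - zb.w0 s) + (‖z.w s‖ - ‖zb.w s‖)|
              ≤ |z.w0 s - zb.w0 s| + |‖z.w s‖ - ‖zb.w s‖| := abs_add_le _ _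
            _ ≤ F s := add_le_add le_rfl h2
        linarith
      · have hsb' : zb.S < s := lt_of_le_of_ne (not_lt.1 hsb) (Ne.symm hne)
        obtain ⟨hb1, hb2⟩ := hzerob s (fun hmm => absurd hmm.2 (not_lt.2 hsb'.le))
        have hws : 0 ≤ z.w0 s := hn ⟨hsM.1.le, hmem.2.le⟩
        have hFs : F s = h s := by
          simp only [hF, hh, hb1, hb2, sub_zero, abs_of_nonneg hws]
        have hIs : I s = 1 := by
          rw [hI]
          exact indicator_of_mem (mem_Ioo.2 ⟨lt_of_le_of_lt (min_le_right _ _) hsb',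
            lt_of_lt_of_le hmem.2 (le_max_left _ _)⟩) _
        rw [hFs, hIs]
        have h0 : 0 ≤ h s := add_nonneg hws (norm_nonneg _)
        exact abs_le.2 ⟨by linarith, by linarith⟩
    · rw [hG, indicator_of_notMem hmem]
      exact add_nonneg (add_nonneg (abs_nonneg _) (norm_nonneg _)) hI0
  -- the main estimate
  have hA_le : (∫ s in Ioo (0:ℝ) z.S, |h s - 1|) ≤ dtil z zb := by
    have e1 : (∫ s in Ioo (0:ℝ) z.S, |h s - 1|) = ∫ s in Ioo (0:ℝ) M, G s := by
      rw [hG, setIntegral_indicator measurableSet_Ioo,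
        inter_eq_self_of_subset_right (Ioo_subset_Ioo_right (le_max_left _ _))]
    have e2 : (∫ s in Ioo (0:ℝ) M, G s) ≤ ∫ s in Ioo (0:ℝ) M, (F s + I s) :=
      setIntegral_mono_ae_restrict hGint.integrableOn (hFint.add hIint).integrableOn
        ((ae_restrict_iff' measurableSet_Ioo).2 hbound)
    have e3 : (∫ s in Ioo (0:ℝ) M, (F s + I s))
        = (∫ s in Ioo (0:ℝ) M, F s) + ∫ s in Ioo (0:ℝ) M, I s :=
      integral_add hFint.integrableOn hIint.integrableOn
    have e4 : (∫ s in Ioo (0:ℝ) M, I s) = |z.S - zb.S| := by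
      rw [hI, setIntegral_indicator measurableSet_Ioo,
        inter_eq_self_of_subset_right (Ioo_subset_Ioo_left hmn0.le)]
      rw [setIntegral_const, Real.volume_real_Ioo_of_le
        (by linarith [min_le_max (a := z.S) (b := zb.S)] : mn ≤ M), smul_eq_mul,
        mul_one, hM, hmn, max_sub_min_eq_abs, abs_sub_comm]
    have e5 : dtil z zb = |z.S - zb.S| + ∫ s in Ioo (0:ℝ) M, F s := by
      rw [dtil, intervalIntegral.integral_of_le hM0.le, integral_Ioc_eq_integral_Ioo]
    rw [e1, e5]
    calc (∫ s in Ioo (0:ℝ) M, G s) ≤ ∫ s in Ioo (0:ℝ) M, (F s + I s) := e2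
      _ = (∫ s in Ioo (0:ℝ) M, F s) + |z.S - zb.S| := by rw [e3, e4]
      _ = |z.S - zb.S| + ∫ s in Ioo (0:ℝ) M, F s := by ring
  refine ⟨by rw [hIoi]; exact hA_le, ?_⟩
  -- pointwise bound on |σ s - s|
  have hkey : ∀ s ∈ Icc (0:ℝ) z.S, |Φ s - s| ≤ ∫ t in Ioo (0:ℝ) z.S, |h t - 1| := by
    intro s hs
    have h1 : Φ s - s = ∫ t in (0:ℝ)..s, (h t - 1) := by
      rw [intervalIntegral.integral_sub hint_h.intervalIntegrable intervalIntegrable_const,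
        intervalIntegral.integral_const, hΦ]
      simp
    rw [h1]
    calc |∫ t in (0:ℝ)..s, (h t - 1)| ≤ ∫ t in Set.uIoc (0:ℝ) s, ‖h t - 1‖ := by
          rw [← Real.norm_eq_abs]
          exact intervalIntegral.norm_integral_le_integral_norm_uIoc
      _ = ∫ t in Ioo (0:ℝ) s, |h t - 1| := by
          rw [uIoc_of_le hs.1, integral_Ioc_eq_integral_Ioo]
          simp [Real.norm_eq_abs]
      _ ≤ ∫ t in Ioo (0:ℝ) z.S, |h t - 1| :=
          setIntegral_mono_set habs_int (Eventually.of_forall fun t => abs_nonneg _)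
            (HasSubset.Subset.eventuallyLE (Ioo_subset_Ioo_right hs.2))
  intro s hs
  rcases le_or_gt s z.S with hle | hgt
  · rw [hσΦ s ⟨hs, hle⟩]
    exact le_trans (hkey s ⟨hs, hle⟩) hA_le
  · have h1 : σ s - s = Φ z.S - z.S := by
      rw [hσ s, if_neg (not_le.2 hgt)]
      have h2 : z.y0 z.S + z.β z.S = Φ z.S := by
        have h3 := hσΦ z.S ⟨hS.le, le_refl _⟩
        rw [hσ z.S, if_pos (le_refl _)] at h3
        exact h3
      rw [h2]; ring
    rw [h1]
    exact le_trans (hkey z.S ⟨hS.le, le_refl _⟩) hA_le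
end

section
/- Let σ : [0,∞) → [0,∞) be a strictly increasing bijection such that both σ and its inverse σ⁻¹ are Lipschitz. Then ∫₀^∞ |d(σ⁻¹)/ds(s) − 1| ds = ∫₀^∞ |dσ/ds(s) − 1| ds (as an equality of values in [0, +∞]). -/
open MeasureTheory Set Filter
open scoped ENNReal InnerProductSpace BigOperators

section Stmt11Aux

open MeasureTheory

private lemma stmt11_lip_max {K : NNReal} {f : ℝ → ℝ} (h : LipschitzOnWith K f (Ici 0)) :
    LipschitzWith K (fun x => f (max x 0)) := by
  intro x y
  have h1 : max x 0 ∈ Ici (0:ℝ) := mem_Ici.2 (le_max_right _ _)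
  have h2 : max y 0 ∈ Ici (0:ℝ) := mem_Ici.2 (le_max_right _ _)
  calc edist (f (max x 0)) (f (max y 0)) ≤ K * edist (max x 0) (max y 0) := h h1 h2
    _ ≤ K * edist x y := by
        gcongr
        rw [edist_dist, edist_dist]
        refine ENNReal.ofReal_le_ofReal ?_
        rw [Real.dist_eq, Real.dist_eq]
        exact abs_max_sub_max_le_abs _ _ _

private lemma stmt11_image_null {K : NNReal} {f : ℝ → ℝ} (h : LipschitzWith K f) {s : Set ℝ}
    (hs : volume s = 0) : volume (f '' s) = 0 := by
  rw [← MeasureTheory.hausdorffMeasure_real] at hs ⊢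
  refine le_antisymm ?_ zero_le
  calc μH[1] (f '' s) ≤ (K : ℝ≥0∞) ^ (1:ℝ) * μH[1] s :=
        h.hausdorffMeasure_image_le zero_le_one s
    _ = 0 := by rw [hs, mul_zero]

private lemma stmt11_deriv_nonneg {f : ℝ → ℝ} (hf : Monotone f) {x : ℝ}
    (h : DifferentiableAt ℝ f x) : 0 ≤ deriv f x := by
  have h' := h.hasDerivAt
  rw [hasDerivAt_iff_tendsto_slope] at h'
  have h'' : Tendsto (slope f x) (nhdsWithin x (Ioi x)) (nhds (deriv f x)) :=
    h'.mono_left (nhdsWithin_mono x fun y hy => ne_of_gt hy)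
  refine ge_of_tendsto h'' ?_
  filter_upwards [self_mem_nhdsWithin] with y hy
  rw [slope_def_field]
  exact div_nonneg (sub_nonneg.2 (hf (le_of_lt hy))) (sub_nonneg.2 (le_of_lt hy))

end Stmt11Aux

/-- For a strictly increasing bijection `σ : [0,∞) → [0,∞)` which is
Lipschitz with Lipschitz inverse `τ`, one has `∫₀^∞ |τ' − 1| = ∫₀^∞ |σ' − 1|`
(as values in `[0,+∞]`). -/
theorem stmt_11 (σ τ : ℝ → ℝ)
    (hmono : StrictMonoOn σ (Ici 0))
    (hbij : Set.BijOn σ (Ici 0) (Ici 0))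
    (hlip : ∃ Kl : NNReal, LipschitzOnWith Kl σ (Ici 0))
    (hτ : ∀ s ∈ Ici (0:ℝ), τ (σ s) = s)
    (hτlip : ∃ Kl : NNReal, LipschitzOnWith Kl τ (Ici 0)) :
    ∫⁻ s in Ioi (0:ℝ), ENNReal.ofReal |deriv τ s - 1| =
      ∫⁻ s in Ioi (0:ℝ), ENNReal.ofReal |deriv σ s - 1| := by
  obtain ⟨K1, hK1⟩ := hlip
  obtain ⟨K2, hK2⟩ := hτlip
  -- σ 0 = 0
  have hσ0 : σ 0 = 0 := by
    obtain ⟨s, hs, hσs⟩ := hbij.surjOn (self_mem_Ici (a := (0:ℝ)))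
    have h1 : σ 0 ≤ σ s := hmono.monotoneOn self_mem_Ici hs (mem_Ici.1 hs)
    have h2 : (0:ℝ) ≤ σ 0 := hbij.mapsTo self_mem_Ici
    exact le_antisymm (hσs ▸ h1) h2
  have hσpos : ∀ x : ℝ, 0 < x → 0 < σ x := fun x hx => by
    have := hmono self_mem_Ici (mem_Ici.2 hx.le) hx
    rwa [hσ0] at this
  set st : ℝ → ℝ := fun x => σ (max x 0) with hst_def
  set tt : ℝ → ℝ := fun x => τ (max x 0) with htt_def
  have hst_eq : ∀ x : ℝ, 0 ≤ x → st x = σ x := fun x hx => by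
    simp only [hst_def, max_eq_left hx]
  have htt_eq : ∀ x : ℝ, 0 ≤ x → tt x = τ x := fun x hx => by
    simp only [htt_def, max_eq_left hx]
  have hst_ev : ∀ x : ℝ, 0 < x → st =ᶠ[nhds x] σ := fun x hx => by
    filter_upwards [Ioi_mem_nhds hx] with y hy
    exact hst_eq y (le_of_lt hy)
  have htt_ev : ∀ x : ℝ, 0 < x → tt =ᶠ[nhds x] τ := fun x hx => by
    filter_upwards [Ioi_mem_nhds hx] with y hy
    exact htt_eq y (le_of_lt hy)
  have hstlip : LipschitzWith K1 st := stmt11_lip_max hK1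
  have httlip : LipschitzWith K2 tt := stmt11_lip_max hK2
  have hstmono : Monotone st := fun x y hxy =>
    hmono.monotoneOn (mem_Ici.2 (le_max_right x 0)) (mem_Ici.2 (le_max_right y 0))
      (max_le_max hxy le_rfl)
  have hts : ∀ x : ℝ, 0 ≤ x → tt (st x) = x := by
    intro x hx
    rw [hst_eq x hx, htt_eq _ (hbij.mapsTo (mem_Ici.2 hx))]
    exact hτ x (mem_Ici.2 hx)
  set s : Set ℝ :=
    (Ioi (0:ℝ) ∩ {x | DifferentiableAt ℝ st x}) ∩ st ⁻¹' {y | DifferentiableAt ℝ tt y}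
    with hs_def
  have hsmeas : MeasurableSet s :=
    (measurableSet_Ioi.inter (measurableSet_of_differentiableAt ℝ st)).inter
      (hstlip.continuous.measurable (measurableSet_of_differentiableAt ℝ tt))
  have hA : volume {x : ℝ | ¬ DifferentiableAt ℝ st x} = 0 :=
    MeasureTheory.ae_iff.mp hstlip.ae_differentiableAt
  have hB : volume {y : ℝ | ¬ DifferentiableAt ℝ tt y} = 0 :=
    MeasureTheory.ae_iff.mp httlip.ae_differentiableAt
  have hnull : volume (Ioi (0:ℝ) \ s) = 0 := by
    have hsub : Ioi (0:ℝ) \ s ⊆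
        {x | ¬ DifferentiableAt ℝ st x} ∪ tt '' {y | ¬ DifferentiableAt ℝ tt y} := by
      rintro x ⟨hx0, hxs⟩
      by_cases h1 : DifferentiableAt ℝ st x
      · refine Or.inr ⟨st x, ?_, hts x (le_of_lt hx0)⟩
        intro h2
        exact hxs ⟨⟨hx0, h1⟩, h2⟩
      · exact Or.inl h1
    exact measure_mono_null hsub
      (measure_union_null hA (stmt11_image_null httlip hB))
  have hs_sub : s ⊆ Ioi (0:ℝ) := fun x hx => hx.1.1
  have hs_ae : s =ᵐ[volume] Ioi (0:ℝ) := by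
    rw [MeasureTheory.ae_eq_set]
    refine ⟨?_, hnull⟩
    rw [Set.diff_eq_empty.2 hs_sub]
    exact measure_empty
  -- the image of s
  have himgsub : st '' s ⊆ Ioi (0:ℝ) := by
    rintro _ ⟨x, hx, rfl⟩
    rw [hst_eq x (le_of_lt hx.1.1)]
    exact hσpos x hx.1.1
  have himg : Ioi (0:ℝ) \ st '' s ⊆ st '' (Ioi (0:ℝ) \ s) := by
    rintro y ⟨hy0, hyns⟩
    obtain ⟨x, hx, hσx⟩ := hbij.surjOn (mem_Ici.2 (le_of_lt hy0))
    have hx0 : 0 < x := by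
      rcases eq_or_lt_of_le (mem_Ici.1 hx) with h | h
      · exfalso
        rw [← h, hσ0] at hσx
        exact absurd hσx.symm (ne_of_gt hy0)
      · exact h
    have hstx : st x = y := by rw [hst_eq x (le_of_lt hx0)]; exact hσx
    by_cases hxs : x ∈ s
    · exact absurd ⟨x, hxs, hstx⟩ hyns
    · exact ⟨x, ⟨hx0, hxs⟩, hstx⟩
  have himg_ae : st '' s =ᵐ[volume] Ioi (0:ℝ) := by
    rw [MeasureTheory.ae_eq_set]
    constructor
    · rw [Set.diff_eq_empty.2 himgsub]; exact measure_empty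
    · exact measure_mono_null himg (stmt11_image_null hstlip hnull)
  -- derivatives on s
  have hinj : Set.InjOn st s := by
    intro x hx y hy hxy
    rw [hst_eq x (le_of_lt hx.1.1), hst_eq y (le_of_lt hy.1.1)] at hxy
    exact hmono.injOn (mem_Ici.2 (le_of_lt hx.1.1)) (mem_Ici.2 (le_of_lt hy.1.1)) hxy
  have hf' : ∀ x ∈ s, HasFDerivWithinAt st
      ((1 : ℝ →L[ℝ] ℝ).smulRight (deriv st x)) s x := by
    intro x hx
    exact (hasDerivWithinAt_iff_hasFDerivWithinAt.1 hx.1.2.hasDerivAt.hasDerivWithinAt)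
  -- chain rule and positivity on s
  have hkey : ∀ x ∈ s,
      ENNReal.ofReal |((1 : ℝ →L[ℝ] ℝ).smulRight (deriv st x)).det| *
        ENNReal.ofReal |deriv τ (st x) - 1| = ENNReal.ofReal |deriv σ x - 1| := by
    intro x hx
    obtain ⟨⟨hx0, hd1⟩, hd2⟩ := hx
    have hd2' : DifferentiableAt ℝ tt (st x) := hd2
    have hstxpos : 0 < st x := by
      rw [hst_eq x (le_of_lt hx0)]; exact hσpos x hx0
    have hab : deriv tt (st x) * deriv st x = 1 := by
      have hcomp : HasDerivAt (tt ∘ st) (deriv tt (st x) * deriv st x) x :=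
        HasDerivAt.comp x hd2'.hasDerivAt hd1.hasDerivAt
      have hid : (id : ℝ → ℝ) =ᶠ[nhds x] (tt ∘ st) := by
        filter_upwards [Ioi_mem_nhds hx0] with y hy
        exact (hts y (le_of_lt hy)).symm
      exact ((hcomp.congr_of_eventuallyEq hid).unique (hasDerivAt_id x)).symm ▸ rfl
    have ha0 : 0 ≤ deriv st x := stmt11_deriv_nonneg hstmono hd1
    have ha : deriv st x ≠ 0 := by
      intro h
      rw [h, mul_zero] at hab
      exact zero_ne_one hab
    have hτd : deriv τ (st x) = deriv tt (st x) :=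
      ((htt_ev (st x) hstxpos).deriv_eq).symm
    have hσd : deriv σ x = deriv st x := ((hst_ev x hx0).deriv_eq).symm
    rw [ContinuousLinearMap.det_smulRight, ContinuousLinearMap.one_apply, one_mul, hτd, hσd,
      ← ENNReal.ofReal_mul (abs_nonneg _)]
    congr 1
    calc |deriv st x| * |deriv tt (st x) - 1|
        = |deriv st x * (deriv tt (st x) - 1)| := (abs_mul _ _).symm
      _ = |deriv tt (st x) * deriv st x - deriv st x| := by ring_nf
      _ = |1 - deriv st x| := by rw [hab]
      _ = |deriv st x - 1| := abs_sub_comm _ _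
  -- put everything together
  calc ∫⁻ y in Ioi (0:ℝ), ENNReal.ofReal |deriv τ y - 1|
      = ∫⁻ y in st '' s, ENNReal.ofReal |deriv τ y - 1| :=
        (MeasureTheory.setLIntegral_congr himg_ae).symm
    _ = ∫⁻ x in s, ENNReal.ofReal |((1 : ℝ →L[ℝ] ℝ).smulRight (deriv st x)).det| *
          ENNReal.ofReal |deriv τ (st x) - 1| :=
        MeasureTheory.lintegral_image_eq_lintegral_abs_det_fderiv_mul volume hsmeas hf' hinj _
    _ = ∫⁻ x in s, ENNReal.ofReal |deriv σ x - 1| :=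
        MeasureTheory.setLIntegral_congr_fun hsmeas
          hkey
    _ = ∫⁻ x in Ioi (0:ℝ), ENNReal.ofReal |deriv σ x - 1| :=
        MeasureTheory.setLIntegral_congr hs_ae
end

section
/- Let A > 0 and let h : [0,∞) → ℝ be measurable with |h| ≤ 1 a.e. For each j ∈ ℕ, j ≥ 1, let σⱼ : [0,∞) → [0,∞) be a strictly increasing bijection, Lipschitz with Lipschitz inverse, such that ∫₀^∞ |dσⱼ/ds(s) − 1| ds ≤ 1/j. Then ∫₀^A |h(σⱼ(s)) − h(s)| ds → 0 as j → ∞. -/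
open MeasureTheory Set Filter
open scoped ENNReal InnerProductSpace BigOperators

theorem lip_image_null_s12 {K : NNReal} {f : ℝ → ℝ} (hf : LipschitzWith K f)
    {N : Set ℝ} (h0 : volume N = 0) : volume (f '' N) = 0 := by
  have h := hf.hausdorffMeasure_image_le (zero_le_one) N
  rw [MeasureTheory.hausdorffMeasure_real] at h
  rw [h0, mul_zero] at h
  exact le_antisymm h zero_le

theorem cov_lintegral {s : Set ℝ} {f : ℝ → ℝ} {f' : ℝ → ℝ}
    (hs : MeasurableSet s) (hf' : ∀ x ∈ s, HasDerivWithinAt f (f' x) s x)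
    (hf : Set.InjOn f s) (g : ℝ → ENNReal) :
    ∫⁻ x in f '' s, g x = ∫⁻ x in s, ENNReal.ofReal |f' x| * g (f x) := by
  simpa only [ContinuousLinearMap.det_toSpanSingleton] using
    MeasureTheory.lintegral_image_eq_lintegral_abs_det_fderiv_mul volume hs
      (fun x hx => (hf' x hx).hasFDerivWithinAt) hf g

theorem sigma_key (σ : ℝ → ℝ) (δ : ℝ) (hδ : 0 ≤ δ)
    (hmono : StrictMonoOn σ (Ici 0)) (hbij : Set.BijOn σ (Ici 0) (Ici 0))
    {Kl : NNReal} (hlip : LipschitzOnWith Kl σ (Ici 0))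
    (hder : (∫⁻ s in Ioi (0:ℝ), ENNReal.ofReal |deriv σ s - 1|) ≤ ENNReal.ofReal δ) :
    (∀ s ∈ Ici (0:ℝ), |σ s - s| ≤ δ) ∧
    (∀ F : ℝ → ENNReal, Measurable F → ∀ C : ENNReal, (∀ t, F t ≤ C) →
      ∀ A : ℝ, 0 ≤ A →
      (∫⁻ x in Ioc (0:ℝ) A, F (σ x)) ≤ (∫⁻ t in Ioi (0:ℝ), F t) + C * ENNReal.ofReal δ) := by
  -- σ 0 = 0
  have hσ0 : σ 0 = 0 := by
    obtain ⟨x, hx, hσx⟩ := hbij.surjOn (self_mem_Ici : (0:ℝ) ∈ Ici 0)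
    rcases eq_or_lt_of_le (mem_Ici.1 hx) with h | h
    · rw [← h] at hσx; exact hσx
    · have h1 : σ 0 < σ x := hmono self_mem_Ici hx h
      have h2 : (0:ℝ) ≤ σ 0 := hbij.mapsTo self_mem_Ici
      rw [hσx] at h1; linarith
  -- extension and differentiability
  obtain ⟨σe, hσe, hEqOn⟩ := hlip.extend_real
  have hae := hσe.ae_differentiableAt_real
  set D : Set ℝ := Ioi 0 ∩ {x | DifferentiableAt ℝ σ x} with hD
  have hDm : MeasurableSet D := measurableSet_Ioi.inter (measurableSet_of_differentiableAt ℝ σ)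
  have hnbhd : ∀ x ∈ Ioi (0:ℝ), σ =ᶠ[nhds x] σe := fun x hx =>
    Filter.eventuallyEq_of_mem (Ioi_mem_nhds hx) (fun y hy => hEqOn (mem_Ici.2 (le_of_lt hy)))
  have hDnull : volume (Ioi (0:ℝ) \ D) = 0 := by
    refine measure_mono_null (t := {x | ¬ DifferentiableAt ℝ σe x}) ?_ ?_
    · intro x hx
      simp only [hD, mem_diff, mem_inter_iff, mem_Ioi, mem_setOf_eq, not_and] at hx ⊢
      intro hdiff
      exact (hx.2 hx.1) (((hnbhd x hx.1).differentiableAt_iff).2 hdiff)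
    · rw [← compl_setOf]
      exact hae
  have hcov : ∀ E : Set ℝ, MeasurableSet E → E ⊆ D → ∀ g : ℝ → ENNReal,
      ∫⁻ x in σ '' E, g x = ∫⁻ x in E, ENNReal.ofReal |deriv σ x| * g (σ x) := by
    intro E hE hED g
    exact cov_lintegral hE (fun x hx => ((hED hx).2.hasDerivAt).hasDerivWithinAt)
      (hmono.injOn.mono (fun x hx => mem_Ici.2 (le_of_lt (hED hx).1))) g
  -- the complement of D∩Ioc inside Icc has null image
  have hrest : ∀ s : ℝ, 0 ≤ s → volume (Icc 0 s \ (D ∩ Ioc 0 s)) = 0 := by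
    intro s hs
    refine measure_mono_null (t := {(0:ℝ)} ∪ (Ioi 0 \ D)) ?_ ?_
    · intro x hx
      obtain ⟨⟨hx0, hxs⟩, hxn⟩ := hx
      rcases eq_or_lt_of_le hx0 with h | h
      · exact Or.inl (by simp [← h])
      · refine Or.inr ⟨h, fun hxD => hxn ⟨hxD, h, hxs⟩⟩
    · exact measure_union_null (measure_singleton 0) hDnull
  have himgrest : ∀ s : ℝ, 0 ≤ s → volume (σ '' (Icc 0 s \ (D ∩ Ioc 0 s))) = 0 := by
    intro s hs
    have heq : σ '' (Icc 0 s \ (D ∩ Ioc 0 s)) = σe '' (Icc 0 s \ (D ∩ Ioc 0 s)) := by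
      apply image_congr
      intro x hx
      exact hEqOn hx.1.1
    rw [heq]
    exact lip_image_null_s12 hσe (hrest s hs)
  have himage : ∀ s : ℝ, 0 ≤ s → σ '' Icc 0 s = Icc 0 (σ s) := by
    intro s hs
    apply Subset.antisymm
    · rintro _ ⟨x, hx, rfl⟩
      constructor
      · rw [← hσ0]
        exact hmono.monotoneOn self_mem_Ici hx.1 hx.1
      · exact hmono.monotoneOn hx.1 (le_trans hx.1 hx.2) hx.2
    · have := intermediate_value_Icc hs (hlip.continuousOn.mono Icc_subset_Ici_self)
      rw [hσ0] at this
      exact this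
  have hvolimg : ∀ s : ℝ, 0 ≤ s →
      volume (σ '' (D ∩ Ioc 0 s)) = ENNReal.ofReal (σ s) := by
    intro s hs
    have h1 : volume (σ '' Icc 0 s) = ENNReal.ofReal (σ s) := by
      rw [himage s hs, Real.volume_Icc, sub_zero]
    have hsub : σ '' Icc 0 s ⊆ σ '' (D ∩ Ioc 0 s) ∪ σ '' (Icc 0 s \ (D ∩ Ioc 0 s)) := by
      rw [← image_union]
      apply image_mono
      intro x hx
      by_cases hxE : x ∈ D ∩ Ioc 0 s
      · exact Or.inl hxE
      · exact Or.inr ⟨hx, hxE⟩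
    have h2 : volume (σ '' Icc 0 s) ≤ volume (σ '' (D ∩ Ioc 0 s)) := by
      calc volume (σ '' Icc 0 s)
          ≤ volume (σ '' (D ∩ Ioc 0 s) ∪ σ '' (Icc 0 s \ (D ∩ Ioc 0 s))) := measure_mono hsub
        _ ≤ volume (σ '' (D ∩ Ioc 0 s)) + volume (σ '' (Icc 0 s \ (D ∩ Ioc 0 s))) :=
            measure_union_le _ _
        _ = volume (σ '' (D ∩ Ioc 0 s)) := by rw [himgrest s hs, add_zero]
    have h3 : volume (σ '' (D ∩ Ioc 0 s)) ≤ volume (σ '' Icc 0 s) :=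
      measure_mono (image_mono (fun x hx => ⟨le_of_lt hx.2.1, hx.2.2⟩))
    rw [← h1]
    exact le_antisymm h3 h2
  have hmeasE : ∀ s : ℝ, MeasurableSet (D ∩ Ioc 0 s) := fun s => hDm.inter measurableSet_Ioc
  have hofD : ∀ s : ℝ, 0 ≤ s →
      ENNReal.ofReal (σ s) = ∫⁻ x in D ∩ Ioc 0 s, ENNReal.ofReal |deriv σ x| := by
    intro s hs
    have := hcov (D ∩ Ioc 0 s) (hmeasE s) inter_subset_left (fun _ => 1)
    simp only [mul_one] at this
    rw [setLIntegral_one] at this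
    rw [← hvolimg s hs, this]
  have hvolE : ∀ s : ℝ, 0 ≤ s → volume (D ∩ Ioc 0 s) = ENNReal.ofReal s := by
    intro s hs
    apply le_antisymm
    · calc volume (D ∩ Ioc 0 s) ≤ volume (Ioc 0 s) := measure_mono inter_subset_right
        _ = ENNReal.ofReal s := by rw [Real.volume_Ioc, sub_zero]
    · have hd : volume (Ioc 0 s \ (D ∩ Ioc 0 s)) = 0 := by
        refine measure_mono_null (t := Ioi 0 \ D) ?_ hDnull
        intro x hx
        exact ⟨hx.1.1, fun hxD => hx.2 ⟨hxD, hx.1⟩⟩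
      calc ENNReal.ofReal s = volume (Ioc 0 s) := by rw [Real.volume_Ioc, sub_zero]
        _ ≤ volume (D ∩ Ioc 0 s) + volume (Ioc 0 s \ (D ∩ Ioc 0 s)) := by
            apply le_trans (measure_mono _) (measure_union_le _ _)
            intro x hx
            by_cases hxE : x ∈ D ∩ Ioc 0 s
            · exact Or.inl hxE
            · exact Or.inr ⟨hx, hxE⟩
        _ = volume (D ∩ Ioc 0 s) := by rw [hd, add_zero]
  have hdE : ∀ s : ℝ, (∫⁻ x in D ∩ Ioc 0 s, ENNReal.ofReal |deriv σ x - 1|) ≤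
      ENNReal.ofReal δ := fun s =>
    le_trans (lintegral_mono_set (fun x hx => hx.1.1)) hder
  have hmder : Measurable fun x => ENNReal.ofReal |deriv σ x - 1| :=
    ((measurable_deriv σ).sub measurable_const).abs.ennreal_ofReal
  constructor
  · intro s hs
    have hs' : (0:ℝ) ≤ s := hs
    have h1 : ENNReal.ofReal (σ s) ≤ ENNReal.ofReal (s + δ) := by
      rw [hofD s hs]
      calc (∫⁻ x in D ∩ Ioc 0 s, ENNReal.ofReal |deriv σ x|)
          ≤ ∫⁻ x in D ∩ Ioc 0 s, (1 + ENNReal.ofReal |deriv σ x - 1|) := by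
            apply lintegral_mono
            intro x
            have : |deriv σ x| ≤ 1 + |deriv σ x - 1| := by
              calc |deriv σ x| = |1 + (deriv σ x - 1)| := by ring_nf
                _ ≤ 1 + |deriv σ x - 1| := by
                    refine le_trans (abs_add_le _ _) ?_
                    simp
            calc ENNReal.ofReal |deriv σ x| ≤ ENNReal.ofReal (1 + |deriv σ x - 1|) :=
                ENNReal.ofReal_le_ofReal this
              _ = 1 + ENNReal.ofReal |deriv σ x - 1| := by
                  rw [ENNReal.ofReal_add zero_le_one (abs_nonneg _), ENNReal.ofReal_one]
        _ = volume (D ∩ Ioc 0 s) + ∫⁻ x in D ∩ Ioc 0 s, ENNReal.ofReal |deriv σ x - 1| := by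
            rw [lintegral_add_left measurable_const, setLIntegral_const, one_mul]
        _ ≤ ENNReal.ofReal s + ENNReal.ofReal δ := by
            rw [hvolE s hs]
            exact add_le_add_right (hdE s) _
        _ = ENNReal.ofReal (s + δ) := (ENNReal.ofReal_add hs hδ).symm
    have h2 : ENNReal.ofReal s ≤ ENNReal.ofReal (σ s + δ) := by
      calc ENNReal.ofReal s = volume (D ∩ Ioc 0 s) := (hvolE s hs).symm
        _ = ∫⁻ x in D ∩ Ioc 0 s, 1 := (setLIntegral_one _).symm
        _ ≤ ∫⁻ x in D ∩ Ioc 0 s,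
            (ENNReal.ofReal |deriv σ x| + ENNReal.ofReal |deriv σ x - 1|) := by
            apply lintegral_mono
            intro x
            have h3 : (1:ℝ) ≤ |deriv σ x| + |deriv σ x - 1| := by
              have := abs_sub_abs_le_abs_sub (deriv σ x) (deriv σ x - 1)
              have h4 := abs_sub (deriv σ x) (deriv σ x - 1)
              have : |deriv σ x - (deriv σ x - 1)| ≤ |deriv σ x| + |deriv σ x - 1| :=
                abs_sub _ _
              simpa using this
            calc (1:ENNReal) = ENNReal.ofReal 1 := ENNReal.ofReal_one.symm
              _ ≤ ENNReal.ofReal (|deriv σ x| + |deriv σ x - 1|) :=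
                  ENNReal.ofReal_le_ofReal h3
              _ = ENNReal.ofReal |deriv σ x| + ENNReal.ofReal |deriv σ x - 1| :=
                  ENNReal.ofReal_add (abs_nonneg _) (abs_nonneg _)
        _ = (∫⁻ x in D ∩ Ioc 0 s, ENNReal.ofReal |deriv σ x|)
            + ∫⁻ x in D ∩ Ioc 0 s, ENNReal.ofReal |deriv σ x - 1| :=
            lintegral_add_right _ hmder
        _ ≤ ENNReal.ofReal (σ s) + ENNReal.ofReal δ := by
            rw [← hofD s hs]
            exact add_le_add_right (hdE s) _
        _ = ENNReal.ofReal (σ s + δ) :=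
            (ENNReal.ofReal_add (hbij.mapsTo hs) hδ).symm
    have hσs : (0:ℝ) ≤ σ s := hbij.mapsTo hs
    have h1' : σ s ≤ s + δ := by
      rw [ENNReal.ofReal_le_ofReal_iff (by linarith)] at h1
      exact h1
    have h2' : s ≤ σ s + δ := by
      rw [ENNReal.ofReal_le_ofReal_iff (by linarith)] at h2
      exact h2
    rw [abs_le]
    constructor <;> linarith
  · intro F hF C hFC A hA
    have hEeq : (D ∩ Ioc 0 A : Set ℝ) =ᵐ[volume] (Ioc 0 A : Set ℝ) := by
      rw [ae_eq_set]
      constructor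
      · exact measure_mono_null (t := ∅) (fun x hx => (hx.2 hx.1.2).elim) measure_empty
      · refine measure_mono_null (t := Ioi 0 \ D) ?_ hDnull
        intro x hx
        exact ⟨hx.1.1, fun hxD => hx.2 ⟨hxD, hx.1⟩⟩
    rw [← setLIntegral_congr hEeq]
    calc (∫⁻ x in D ∩ Ioc 0 A, F (σ x))
        ≤ ∫⁻ x in D ∩ Ioc 0 A,
          (ENNReal.ofReal |deriv σ x| * F (σ x) + ENNReal.ofReal |deriv σ x - 1| * C) := by
          apply lintegral_mono_ae
          filter_upwards [ae_restrict_mem (hmeasE A)] with x hx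
          have h3 : (1:ℝ) ≤ |deriv σ x| + |deriv σ x - 1| := by
            have : |deriv σ x - (deriv σ x - 1)| ≤ |deriv σ x| + |deriv σ x - 1| := abs_sub _ _
            simpa using this
          calc F (σ x) = 1 * F (σ x) := (one_mul _).symm
            _ ≤ (ENNReal.ofReal |deriv σ x| + ENNReal.ofReal |deriv σ x - 1|) * F (σ x) := by
                apply mul_le_mul_left
                calc (1:ENNReal) = ENNReal.ofReal 1 := ENNReal.ofReal_one.symm
                  _ ≤ ENNReal.ofReal (|deriv σ x| + |deriv σ x - 1|) :=
                      ENNReal.ofReal_le_ofReal h3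
                  _ = _ := ENNReal.ofReal_add (abs_nonneg _) (abs_nonneg _)
            _ = ENNReal.ofReal |deriv σ x| * F (σ x)
                + ENNReal.ofReal |deriv σ x - 1| * F (σ x) := add_mul _ _ _
            _ ≤ ENNReal.ofReal |deriv σ x| * F (σ x)
                + ENNReal.ofReal |deriv σ x - 1| * C :=
                add_le_add_right (mul_le_mul_right (hFC _) _) _
      _ = (∫⁻ x in D ∩ Ioc 0 A, ENNReal.ofReal |deriv σ x| * F (σ x))
          + ∫⁻ x in D ∩ Ioc 0 A, ENNReal.ofReal |deriv σ x - 1| * C :=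
          lintegral_add_right _ (hmder.mul_const C)
      _ ≤ (∫⁻ t in Ioi (0:ℝ), F t) + C * ENNReal.ofReal δ := by
          apply add_le_add
          · rw [← hcov (D ∩ Ioc 0 A) (hmeasE A) inter_subset_left F]
            apply lintegral_mono_set
            rintro _ ⟨x, hx, rfl⟩
            have : σ 0 < σ x := hmono self_mem_Ici (mem_Ici.2 (le_of_lt hx.1.1)) hx.1.1
            rw [hσ0] at this
            exact this
          · rw [lintegral_mul_const _ hmder]
            rw [mul_comm]
            exact mul_le_mul_right (hdE A) C

/-- If `|h| ≤ 1` a.e. and `σⱼ` are strictly increasing bi-Lipschitz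
bijections of `[0,∞)` with `∫₀^∞ |σⱼ' − 1| ≤ 1/j`, then
`∫₀^A |h ∘ σⱼ − h| → 0`. -/
theorem stmt_12 (A : ℝ) (hA : 0 < A) (h : ℝ → ℝ) (hmeas : Measurable h)
    (hbd : ∀ᵐ s ∂(volume.restrict (Ici (0:ℝ))), |h s| ≤ 1)
    (σ : ℕ → ℝ → ℝ)
    (hσ : ∀ j : ℕ, 1 ≤ j →
      StrictMonoOn (σ j) (Ici 0) ∧ Set.BijOn (σ j) (Ici 0) (Ici 0) ∧
      (∃ Kl : NNReal, LipschitzOnWith Kl (σ j) (Ici 0)) ∧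
      (∃ τ : ℝ → ℝ, (∀ s ∈ Ici (0:ℝ), τ (σ j s) = s) ∧
          ∃ Kl : NNReal, LipschitzOnWith Kl τ (Ici 0)) ∧
      (∫⁻ s in Ioi (0:ℝ), ENNReal.ofReal |deriv (σ j) s - 1|) ≤ ENNReal.ofReal (1 / j)) :
    Tendsto (fun j : ℕ => ∫ s in (0:ℝ)..A, |h (σ j s) - h s|) atTop (nhds 0) := by
  rw [Metric.tendsto_atTop]
  intro ε hε
  -- clamped and truncated version of h
  set clamp : ℝ → ℝ := fun t => max (-1) (min (h t) 1) with hclampdef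
  have hclampm : Measurable clamp := Measurable.max measurable_const (hmeas.min measurable_const)
  have hclampbd : ∀ t, |clamp t| ≤ 1 := by
    intro t
    rw [abs_le]
    exact ⟨le_max_left _ _, max_le (by norm_num) (min_le_right _ _)⟩
  have hclampeq : ∀ t, |h t| ≤ 1 → clamp t = h t := by
    intro t ht
    rw [abs_le] at ht
    simp only [hclampdef, min_eq_left ht.2, max_eq_right ht.1]
  set h' : ℝ → ℝ := (Icc (0:ℝ) (A+1)).indicator clamp with hh'def
  have hh'm : Measurable h' := hclampm.indicator measurableSet_Icc
  have hh'bd : ∀ t, |h' t| ≤ 1 := by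
    intro t
    by_cases ht : t ∈ Icc (0:ℝ) (A+1)
    · rw [hh'def, indicator_of_mem ht]; exact hclampbd t
    · rw [hh'def, indicator_of_notMem ht]; simp
  have hh'int : Integrable h' := by
    rw [hh'def, integrable_indicator_iff measurableSet_Icc]
    apply Integrable.mono' (g := fun _ => (1:ℝ))
        (integrableOn_const (by rw [Real.volume_Icc]; exact ENNReal.ofReal_ne_top))
        hclampm.aestronglyMeasurable
    exact ae_of_all _ fun x => by simpa [Real.norm_eq_abs] using hclampbd x
  have hε8 : 0 < ε / 8 := by linarith
  obtain ⟨g, hgsupp, hgapprox, hgcont, hgint⟩ :=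
    hh'int.exists_hasCompactSupport_integral_sub_le hε8
  obtain ⟨Mg, hMg⟩ := hgsupp.exists_bound_of_continuous hgcont
  set Cb : ℝ := 1 + max Mg 0 with hCbdef
  have hCbpos : 0 < Cb := by positivity
  have hCb : ∀ t, |h' t - g t| ≤ Cb := by
    intro t
    calc |h' t - g t| ≤ |h' t| + |g t| := abs_sub _ _
      _ ≤ 1 + max Mg 0 := add_le_add (hh'bd t)
          (le_trans (le_of_eq (Real.norm_eq_abs _).symm) (le_trans (hMg t) (le_max_left _ _)))
      _ = Cb := rfl
  have hgu : UniformContinuous g := hgsupp.uniformContinuous_of_continuous hgcont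
  have hεA : 0 < ε / (8 * (A + 1)) := by positivity
  obtain ⟨δ₂, hδ₂pos, hδ₂⟩ := Metric.uniformContinuous_iff.1 hgu _ hεA
  set d : ℝ := min δ₂ (min 1 (ε / 8 / Cb)) with hddef
  have hdpos : 0 < d := by
    apply lt_min hδ₂pos
    apply lt_min one_pos
    positivity
  obtain ⟨N₁, hN₁⟩ := exists_nat_one_div_lt hdpos
  refine ⟨N₁ + 1, fun j hj => ?_⟩
  have hj1 : 1 ≤ j := le_trans (Nat.le_add_left 1 N₁) hj
  have hjpos : (0:ℝ) < j := by exact_mod_cast hj1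
  set δ : ℝ := 1 / (j:ℝ) with hδdef
  have hδpos : 0 < δ := by positivity
  have hδd : δ < d := by
    apply lt_of_le_of_lt _ hN₁
    apply one_div_le_one_div_of_le (by positivity)
    exact_mod_cast hj
  have hδδ₂ : δ < δ₂ := lt_of_lt_of_le hδd (min_le_left _ _)
  have hδ1 : δ ≤ 1 := le_of_lt (lt_of_lt_of_le hδd (le_trans (min_le_right _ _) (min_le_left _ _)))
  have hCbδ : Cb * δ ≤ ε / 8 := by
    have : δ ≤ ε / 8 / Cb :=
      le_of_lt (lt_of_lt_of_le hδd (le_trans (min_le_right _ _) (min_le_right _ _)))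
    calc Cb * δ ≤ Cb * (ε / 8 / Cb) := by nlinarith
      _ = ε / 8 := by field_simp
  obtain ⟨hmono, hbij, ⟨Kl, hlip⟩, ⟨τ, hτσ, Kτ, hτlip⟩, hder⟩ := hσ j hj1
  obtain ⟨hsup, hkey⟩ := sigma_key (σ j) δ hδpos.le hmono hbij hlip hder
  -- basic facts about σ j on [0, A]
  have hσmem : ∀ s ∈ Ioc (0:ℝ) A, σ j s ∈ Icc (0:ℝ) (A + 1) := by
    intro s hs
    have hs0 : (0:ℝ) ≤ s := hs.1.le
    have h1 : (0:ℝ) ≤ σ j s := hbij.mapsTo hs0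
    have h2 : σ j s - s ≤ δ := (abs_le.1 (hsup s hs0)).2
    exact ⟨h1, by linarith [hs.2]⟩
  -- measurability of the integrand
  set μA := volume.restrict (Ioc (0:ℝ) A) with hμAdef
  have hσae : AEMeasurable (σ j) μA :=
    (hlip.continuousOn.mono (fun x hx => hx.1.le)).aemeasurable measurableSet_Ioc
  have hfae : AEStronglyMeasurable (fun s => |h (σ j s) - h s|) μA := by
    have hsub : AEMeasurable (fun s => h (σ j s) - h s) μA :=
      (hmeas.comp_aemeasurable hσae).sub hmeas.aemeasurable
    exact (continuous_abs.measurable.comp_aemeasurable hsub).aestronglyMeasurable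
  -- the bad null set where |h| > 1
  set Nbad : Set ℝ := {t | 0 ≤ t ∧ ¬ |h t| ≤ 1} with hNdef
  have hNnull : volume Nbad = 0 := by
    have h0 := ae_iff.1 hbd
    rw [Measure.restrict_apply₀'] at h0
    · refine measure_mono_null (t := {a | ¬|h a| ≤ 1} ∩ Ici 0) ?_ h0
      intro x hx
      exact ⟨hx.2, hx.1⟩
    · exact (measurableSet_Ici (a := (0:ℝ))).nullMeasurableSet
  obtain ⟨τe, hτe, hτeq⟩ := hτlip.extend_real
  have hτN : volume (τe '' Nbad) = 0 := lip_image_null_s12 hτe hNnull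
  have hBadnull : μA {s | σ j s ∈ Nbad} = 0 := by
    apply le_antisymm _ zero_le
    calc μA {s | σ j s ∈ Nbad} ≤ volume ({s | σ j s ∈ Nbad} ∩ Ioc 0 A) := by
          rw [hμAdef, Measure.restrict_apply₀' measurableSet_Ioc.nullMeasurableSet]
      _ ≤ volume (τe '' Nbad) := by
          apply measure_mono
          rintro x ⟨hxN, hxI⟩
          have hx0 : (0:ℝ) ≤ x := hxI.1.le
          refine ⟨σ j x, hxN, ?_⟩
          rw [← hτeq (hxN.1 : (0:ℝ) ≤ σ j x)]
          exact hτσ x hx0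
      _ = 0 := hτN
  -- a.e. equality with the truncated function
  have hae_eq : ∀ᵐ s ∂μA,
      ENNReal.ofReal |h (σ j s) - h s| = ENNReal.ofReal |h' (σ j s) - h' s| := by
    have hmem : ∀ᵐ s ∂μA, s ∈ Ioc (0:ℝ) A :=
      ae_restrict_mem (measurableSet_Ioc (a := (0:ℝ)) (b := A))
    have hb1 : ∀ᵐ s ∂μA, |h s| ≤ 1 :=
      ae_restrict_of_ae_restrict_of_subset (fun x hx => hx.1.le) hbd
    have hnb : ∀ᵐ s ∂μA, σ j s ∉ Nbad := by
      rw [ae_iff]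
      simpa using hBadnull
    filter_upwards [hmem, hb1, hnb] with s hs hs1 hsn
    have e1 : h' s = h s := by
      rw [hh'def, indicator_of_mem (mem_Icc.2 ⟨hs.1.le, by linarith [hs.2]⟩)]
      exact hclampeq s hs1
    have e2 : h' (σ j s) = h (σ j s) := by
      have hσs := hσmem s hs
      rw [hh'def, indicator_of_mem hσs]
      apply hclampeq
      by_contra hcon
      exact hsn ⟨hσs.1, hcon⟩
    rw [e1, e2]
  -- the three-term bound
  set Fg : ℝ → ENNReal := fun t => ENNReal.ofReal |h' t - g t| with hFgdef
  have hFgm : Measurable Fg := ((hh'm.sub hgcont.measurable).abs).ennreal_ofReal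
  have hFgtot : (∫⁻ t, Fg t) ≤ ENNReal.ofReal (ε / 8) := by
    have hint : Integrable (fun t => |h' t - g t|) := (hh'int.sub hgint).abs
    have := MeasureTheory.ofReal_integral_eq_lintegral_ofReal hint
      (ae_of_all _ fun x => abs_nonneg _)
    rw [hFgdef, ← this]
    apply ENNReal.ofReal_le_ofReal
    simpa [Real.norm_eq_abs] using hgapprox
  have hterm1 : (∫⁻ s in Ioc (0:ℝ) A, Fg (σ j s)) ≤
      ENNReal.ofReal (ε / 8) + ENNReal.ofReal Cb * ENNReal.ofReal δ := by
    refine le_trans (hkey Fg hFgm (ENNReal.ofReal Cb)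
      (fun t => ENNReal.ofReal_le_ofReal (hCb t)) A hA.le) ?_
    apply add_le_add_left
    exact le_trans (lintegral_mono_set (subset_univ _)) (by rw [setLIntegral_univ]; exact hFgtot)
  have hterm2 : (∫⁻ s in Ioc (0:ℝ) A, ENNReal.ofReal |g (σ j s) - g s|) ≤
      ENNReal.ofReal (ε / (8 * (A + 1)) * A) := by
    calc (∫⁻ s in Ioc (0:ℝ) A, ENNReal.ofReal |g (σ j s) - g s|)
        ≤ ∫⁻ _ in Ioc (0:ℝ) A, ENNReal.ofReal (ε / (8 * (A + 1))) := by
          apply lintegral_mono_ae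
          filter_upwards [ae_restrict_mem (measurableSet_Ioc (a := (0:ℝ)) (b := A))] with s hs
          apply ENNReal.ofReal_le_ofReal
          have hd : dist (σ j s) s < δ₂ := by
            rw [Real.dist_eq]
            exact lt_of_le_of_lt (hsup s hs.1.le) hδδ₂
          have := hδ₂ hd
          rw [Real.dist_eq] at this
          exact this.le
      _ = ENNReal.ofReal (ε / (8 * (A + 1))) * volume (Ioc (0:ℝ) A) := setLIntegral_const _ _
      _ = ENNReal.ofReal (ε / (8 * (A + 1)) * A) := by
          rw [Real.volume_Ioc, sub_zero, ← ENNReal.ofReal_mul hεA.le]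
  have hterm3 : (∫⁻ s in Ioc (0:ℝ) A, Fg s) ≤ ENNReal.ofReal (ε / 8) :=
    le_trans (lintegral_mono_set (subset_univ _)) (by rw [setLIntegral_univ]; exact hFgtot)
  -- putting everything together
  have hL : (∫⁻ s in Ioc (0:ℝ) A, ENNReal.ofReal |h (σ j s) - h s|) ≤
      ENNReal.ofReal (ε / 2) := by
    rw [lintegral_congr_ae hae_eq]
    have hsplit : (∫⁻ s in Ioc (0:ℝ) A, ENNReal.ofReal |h' (σ j s) - h' s|) ≤
        (∫⁻ s in Ioc (0:ℝ) A, Fg (σ j s))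
        + (∫⁻ s in Ioc (0:ℝ) A, ENNReal.ofReal |g (σ j s) - g s|)
        + (∫⁻ s in Ioc (0:ℝ) A, Fg s) := by
      have hmono' : (∫⁻ s in Ioc (0:ℝ) A, ENNReal.ofReal |h' (σ j s) - h' s|) ≤
          ∫⁻ s in Ioc (0:ℝ) A,
            (Fg (σ j s) + ENNReal.ofReal |g (σ j s) - g s| + Fg s) := by
        apply lintegral_mono
        intro s
        have htri : |h' (σ j s) - h' s| ≤
            |h' (σ j s) - g (σ j s)| + |g (σ j s) - g s| + |g s - h' s| := by
          have := abs_sub_le (h' (σ j s)) (g (σ j s)) (h' s)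
          have h2 := abs_sub_le (g (σ j s)) (g s) (h' s)
          linarith [abs_sub_le (h' (σ j s)) (g (σ j s)) (g s),
            abs_sub_le (g (σ j s)) (g s) (h' s)]
        calc ENNReal.ofReal |h' (σ j s) - h' s|
            ≤ ENNReal.ofReal (|h' (σ j s) - g (σ j s)| + |g (σ j s) - g s| + |g s - h' s|) :=
              ENNReal.ofReal_le_ofReal htri
          _ = ENNReal.ofReal |h' (σ j s) - g (σ j s)| + ENNReal.ofReal |g (σ j s) - g s|
              + ENNReal.ofReal |g s - h' s| := by
              rw [ENNReal.ofReal_add (by positivity) (abs_nonneg _),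
                ENNReal.ofReal_add (abs_nonneg _) (abs_nonneg _)]
          _ = Fg (σ j s) + ENNReal.ofReal |g (σ j s) - g s| + Fg s := by
              rw [hFgdef]
              simp only [abs_sub_comm (g s) (h' s)]
      refine le_trans hmono' (le_of_eq ?_)
      have hf3 : AEMeasurable Fg μA := hFgm.aemeasurable
      have hf2 : AEMeasurable (fun s => ENNReal.ofReal |g (σ j s) - g s|) μA := by
        have hsub : AEMeasurable (fun s => g (σ j s) - g s) μA :=
          (hgcont.measurable.comp_aemeasurable hσae).sub hgcont.measurable.aemeasurable
        exact (continuous_abs.measurable.comp_aemeasurable hsub).ennreal_ofReal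
      rw [lintegral_add_right' _ hf3, lintegral_add_right' _ hf2]
    have hA8 : ε / (8 * (A + 1)) * A ≤ ε / 8 := by
      rw [div_mul_eq_mul_div, div_le_div_iff₀ (by positivity) (by norm_num)]
      nlinarith
    calc (∫⁻ s in Ioc (0:ℝ) A, ENNReal.ofReal |h' (σ j s) - h' s|)
        ≤ (∫⁻ s in Ioc (0:ℝ) A, Fg (σ j s))
          + (∫⁻ s in Ioc (0:ℝ) A, ENNReal.ofReal |g (σ j s) - g s|)
          + (∫⁻ s in Ioc (0:ℝ) A, Fg s) := hsplit
      _ ≤ (ENNReal.ofReal (ε / 8) + ENNReal.ofReal Cb * ENNReal.ofReal δ)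
          + ENNReal.ofReal (ε / (8 * (A + 1)) * A) + ENNReal.ofReal (ε / 8) :=
          add_le_add (add_le_add hterm1 hterm2) hterm3
      _ = ENNReal.ofReal (ε / 8 + Cb * δ + ε / (8 * (A + 1)) * A + ε / 8) := by
          rw [← ENNReal.ofReal_mul hCbpos.le,
            ← ENNReal.ofReal_add (by positivity) (by positivity),
            ← ENNReal.ofReal_add (by positivity) (by positivity),
            ← ENNReal.ofReal_add (by positivity) (by positivity)]
      _ ≤ ENNReal.ofReal (ε / 2) := ENNReal.ofReal_le_ofReal (by linarith)
  have hIeq : (∫ s in (0:ℝ)..A, |h (σ j s) - h s|)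
      = (∫⁻ s in Ioc (0:ℝ) A, ENNReal.ofReal |h (σ j s) - h s|).toReal := by
    rw [intervalIntegral.integral_of_le hA.le,
      integral_eq_lintegral_of_nonneg_ae (ae_of_all _ fun x => abs_nonneg _) hfae]
  rw [Real.dist_eq, sub_zero, hIeq, abs_of_nonneg ENNReal.toReal_nonneg]
  have := ENNReal.toReal_le_of_le_ofReal (by linarith : (0:ℝ) ≤ ε / 2) hL
  linarith
end
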